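/- arXiv:1910.04300 — 10 statements merged into one kernel-verified Lean document; each statement's English description precedes it below -/
import Mathlib

section
/- Let A be a real n×m matrix with full column rank m, g ∈ ℝⁿ, c ∈ ℝᵐ, σ ∈ ℝ, and let D be an invertible m×m diagonal matrix. Let y solve AᵀA y = Aᵀg − σc and let y_D solve (AD)ᵀ(AD) y_D = (AD)ᵀg − σ(Dc). Then D y_D = y and (Dc)ᵀ y_D = cᵀ y. In particular, Fletcher's penalty value f − cᵀy is invariant under replacing c by Dc and A by AD. -/
open Matrix

/-- Fletcher's multiplier estimate and penalty value are invariant under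
diagonal rescaling of the constraints: if `y` solves `AᵀA y = Aᵀg − σc` and `y_D` solves
`(AD)ᵀ(AD) y_D = (AD)ᵀg − σ(Dc)` for an invertible diagonal `D`, then `D y_D = y`,
`(Dc)ᵀ y_D = cᵀ y`, and hence the penalty value `f − cᵀy` is unchanged. -/
theorem fletcher_penalty_scale_invariance
    {n m : ℕ} (A : Matrix (Fin n) (Fin m) ℝ) (hA : A.rank = m)
    (g : Fin n → ℝ) (c : Fin m → ℝ) (σ : ℝ)
    (D : Matrix (Fin m) (Fin m) ℝ) (hDdiag : D.IsDiag) (hDinv : IsUnit D.det)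
    (y yD : Fin m → ℝ)
    (hy : (Aᵀ * A).mulVec y = Aᵀ.mulVec g - σ • c)
    (hyD : ((A * D)ᵀ * (A * D)).mulVec yD = (A * D)ᵀ.mulVec g - σ • D.mulVec c) :
    D.mulVec yD = y ∧
    D.mulVec c ⬝ᵥ yD = c ⬝ᵥ y ∧
    ∀ f : ℝ, f - D.mulVec c ⬝ᵥ yD = f - c ⬝ᵥ y := by
  have hDT : Dᵀ = D := hDdiag.isSymm
  -- injectivity of (AᵀA).mulVec
  have hker : LinearMap.ker (Aᵀ * A).mulVecLin = ⊥ := by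
    rw [Matrix.ker_mulVecLin_transpose_mul_self]
    have h1 := A.mulVecLin.finrank_range_add_finrank_ker
    rw [show Module.finrank ℝ (LinearMap.range A.mulVecLin) = m from hA,
      Module.finrank_pi] at h1
    have : Module.finrank ℝ (LinearMap.ker A.mulVecLin) = 0 := by
      simpa using h1
    exact Submodule.finrank_eq_zero.mp this
  have hinj : Function.Injective (Aᵀ * A).mulVec :=
    (LinearMap.ker_eq_bot.mp hker :)
  have hDi : Function.Injective D.mulVec := by
    intro u v huv
    have := congrArg (D⁻¹).mulVec huv
    simpa [Matrix.mulVec_mulVec, Matrix.nonsing_inv_mul D hDinv] using this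
  have hD' : (Aᵀ * A).mulVec (D.mulVec yD) = Aᵀ.mulVec g - σ • c := by
    refine hDi ?_
    have h3 := hyD
    rw [Matrix.transpose_mul, hDT] at h3
    have e1 : D * Aᵀ * (A * D) = D * (Aᵀ * A) * D := by
      simp only [Matrix.mul_assoc]
    rw [e1] at h3
    calc D.mulVec ((Aᵀ * A).mulVec (D.mulVec yD))
        = (D * (Aᵀ * A) * D).mulVec yD := by
          simp [Matrix.mulVec_mulVec, Matrix.mul_assoc]
      _ = (D * Aᵀ).mulVec g - σ • D.mulVec c := h3
      _ = D.mulVec (Aᵀ.mulVec g - σ • c) := by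
          simp [Matrix.mulVec_sub, Matrix.mulVec_smul, Matrix.mulVec_mulVec]
  have h1 : D.mulVec yD = y := hinj (hD'.trans hy.symm)
  have h2 : D.mulVec c ⬝ᵥ yD = c ⬝ᵥ y := by
    rw [← h1, Matrix.dotProduct_mulVec, ← Matrix.mulVec_transpose, hDT]
  exact ⟨h1, h2, fun f => by rw [h2]⟩
end

section
/- Let A be a real n×m matrix, Y a real n×m matrix, g ∈ ℝⁿ, c ∈ ℝᵐ, y ∈ ℝᵐ, and σ > 0. Suppose AᵀA y = Aᵀg − σc (the normal equations defining the multiplier estimate) and g = A y + Y c (stationarity of Fletcher's penalty function). If σ > ‖AᵀY‖₂ (operator 2-norm), then c = 0 and g = A y. -/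
/-! Substituting the stationarity condition `g = Ay + Yc` into the normal equations cancels
`AᵀA y` and leaves `(AᵀY) c = σ c`. So a nonzero `c` would be an eigenvector of `AᵀY` with
eigenvalue `σ`, forcing `σ ≤ ‖AᵀY‖₂`. -/

open Matrix

/-- The operator 2-norm of a real matrix: the norm of the induced linear map between
Euclidean spaces. -/
noncomputable def opNorm2 {n m : ℕ} (A : Matrix (Fin n) (Fin m) ℝ) : ℝ :=
  ‖LinearMap.toContinuousLinearMap (Matrix.toEuclideanLin A)‖

theorem ContinuousLinearMap.eq_zero_of_apply_eq_smul_of_opNorm_lt {𝕜 E : Type*}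
    [NontriviallyNormedField 𝕜] [NormedAddCommGroup E] [NormedSpace 𝕜 E] (T : E →L[𝕜] E)
    {v : E} {σ : 𝕜} (hv : T v = σ • v) (hT : ‖T‖ < ‖σ‖) : v = 0 := by
  have hle : ‖σ‖ * ‖v‖ ≤ ‖T‖ * ‖v‖ := by
    rw [← norm_smul, ← hv]
    exact T.le_opNorm v
  by_contra hne
  exact (le_of_mul_le_mul_right hle (norm_pos_iff.mpr hne)).not_gt hT

theorem Matrix.eq_zero_of_mulVec_eq_smul_of_opNorm2_lt {m : ℕ} (M : Matrix (Fin m) (Fin m) ℝ)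
    {v : Fin m → ℝ} {σ : ℝ} (hv : M *ᵥ v = σ • v) (hM : opNorm2 M < σ) : v = 0 := by
  have hσ : ‖(LinearMap.toContinuousLinearMap (toEuclideanLin M))‖ < ‖σ‖ :=
    hM.trans_le (Real.le_norm_self σ)
  have hv' : toEuclideanLin M (WithLp.toLp 2 v) = σ • WithLp.toLp 2 v := by
    rw [toLpLin_toLp, toLin'_apply, hv]
    rfl
  simpa using ContinuousLinearMap.eq_zero_of_apply_eq_smul_of_opNorm_lt _ hv' hσ

theorem Matrix.mulVec_eq_smul_of_normal_eq_of_eq_add {ι κ R : Type*} [Fintype ι] [Fintype κ]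
    [CommRing R] (A Y : Matrix ι κ R) {g : ι → R} {c y : κ → R} {σ : R}
    (hnormal : (Aᵀ * A) *ᵥ y = Aᵀ *ᵥ g - σ • c) (hstat : g = A *ᵥ y + Y *ᵥ c) :
    (Aᵀ * Y) *ᵥ c = σ • c := by
  rw [hstat, mulVec_add, mulVec_mulVec, mulVec_mulVec] at hnormal
  rwa [add_sub_assoc, eq_comm, add_eq_left, sub_eq_zero] at hnormal

theorem fletcher_stationary_implies_feasible_general
    {n m : ℕ} (A Y : Matrix (Fin n) (Fin m) ℝ)
    (g : Fin n → ℝ) (c y : Fin m → ℝ) (σ : ℝ)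
    (hnormal : (Aᵀ * A).mulVec y = Aᵀ.mulVec g - σ • c)
    (hstat : g = A.mulVec y + Y.mulVec c)
    (hbig : opNorm2 (Aᵀ * Y) < σ) :
    c = 0 ∧ g = A.mulVec y := by
  have hc : c = 0 := (Aᵀ * Y).eq_zero_of_mulVec_eq_smul_of_opNorm2_lt
    (mulVec_eq_smul_of_normal_eq_of_eq_add A Y hnormal hstat) hbig
  refine ⟨hc, ?_⟩
  rw [hstat, hc, mulVec_zero, add_zero]

/-- If `AᵀA y = Aᵀg − σc` (normal equations for the multiplier estimate),
`g = Ay + Yc` (stationarity of Fletcher's penalty), and `σ > ‖AᵀY‖₂`, then `c = 0`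
and `g = Ay`. -/
theorem fletcher_stationary_implies_feasible
    {n m : ℕ} (A Y : Matrix (Fin n) (Fin m) ℝ)
    (g : Fin n → ℝ) (c y : Fin m → ℝ) (σ : ℝ) (hσ : 0 < σ)
    (hnormal : (Aᵀ * A).mulVec y = Aᵀ.mulVec g - σ • c)
    (hstat : g = A.mulVec y + Y.mulVec c)
    (hbig : opNorm2 (Aᵀ * Y) < σ) :
    c = 0 ∧ g = A.mulVec y :=
  fletcher_stationary_implies_feasible_general A Y g c y σ hnormal hstat hbig
end

section
/- Let P be a nonzero real symmetric n×n matrix with P² = P (an orthogonal projector), H a symmetric n×n matrix, and σ ∈ ℝ. If σ ≥ ‖P(H − σI)‖₂ (operator 2-norm), then σ ≥ ½·max{λ_max(PHP), 0}, where λ_max denotes the largest eigenvalue. -/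
/-! A positive eigenvalue `μ` of `PHP` has its eigenvectors in the range of `P`, on which
`P(H - σI)` acts as multiplication by `μ - σ`. Hence `|μ - σ| ≤ ‖P(H - σI)‖₂ ≤ σ`, so `μ ≤ 2σ`. -/

open Matrix

theorem opNorm2_nonneg {n m : ℕ} (A : Matrix (Fin n) (Fin m) ℝ) : 0 ≤ opNorm2 A :=
  norm_nonneg _

theorem abs_eigenvalue_le_opNorm2 {n : ℕ} {A : Matrix (Fin n) (Fin n) ℝ} {v : Fin n → ℝ}
    {r : ℝ} (hv0 : v ≠ 0) (hv : A *ᵥ v = r • v) : |r| ≤ opNorm2 A := by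
  set x : EuclideanSpace ℝ (Fin n) := WithLp.toLp 2 v
  have hx : 0 < ‖x‖ := norm_pos_iff.mpr (by simpa [x] using hv0)
  have hAx : (LinearMap.toContinuousLinearMap (toEuclideanLin A)) x = r • x := by
    simp [x, hv]
  have h := (LinearMap.toContinuousLinearMap (toEuclideanLin A)).le_opNorm x
  rw [hAx, norm_smul, Real.norm_eq_abs] at h
  exact le_of_mul_le_mul_right h hx

section Projector

variable {ι K : Type*} [Fintype ι] [Field K] {P B : Matrix ι ι K} {v : ι → K} {r : K}

theorem mulVec_eq_self_of_idempotent_of_mul_mulVec_eq_smul (hP : P * P = P)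
    (hr : r ≠ 0) (hv : (P * B) *ᵥ v = r • v) : P *ᵥ v = v := by
  have h : P *ᵥ ((P * B) *ᵥ v) = (P * B) *ᵥ v := by rw [mulVec_mulVec, ← mul_assoc, hP]
  rw [hv, mulVec_smul] at h
  exact smul_right_injective _ hr h

variable [DecidableEq ι]

theorem mul_sub_smul_one_mulVec_eq_smul {H : Matrix ι ι K} {μ : K} (σ : K)
    (hPv : P *ᵥ v = v) (hv : (P * H * P) *ᵥ v = μ • v) :
    (P * (H - σ • 1)) *ᵥ v = (μ - σ) • v := by
  have hPH : (P * H) *ᵥ v = μ • v := by rw [← hv, ← mulVec_mulVec v (P * H) P, hPv]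
  rw [mul_sub, Matrix.mul_smul, mul_one, sub_mulVec, smul_mulVec, hPH, hPv, sub_smul]

end Projector

theorem fletcher_threshold_from_norm_bound_general
    {n : ℕ} (P H : Matrix (Fin n) (Fin n) ℝ)
    (hPproj : P * P = P)
    (σ μ : ℝ)
    (hμ : IsGreatest {r : ℝ | ∃ v : Fin n → ℝ, v ≠ 0 ∧ (P * H * P).mulVec v = r • v} μ)
    (hσ : opNorm2 (P * (H - σ • 1)) ≤ σ) :
    max μ 0 / 2 ≤ σ := by
  have hσ0 : 0 ≤ σ := (opNorm2_nonneg _).trans hσ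
  obtain ⟨⟨v, hv0, hv⟩, -⟩ := hμ
  rcases le_or_gt μ 0 with hμ0 | hμ0
  · rw [max_eq_right hμ0]
    linarith
  have hPv : P *ᵥ v = v :=
    mulVec_eq_self_of_idempotent_of_mul_mulVec_eq_smul hPproj hμ0.ne' (by rwa [← mul_assoc])
  have hshift := mul_sub_smul_one_mulVec_eq_smul σ hPv hv
  have hbound := (abs_eigenvalue_le_opNorm2 hv0 hshift).trans hσ
  rw [max_eq_left hμ0.le]
  linarith [le_abs_self (μ - σ)]

/-- For a nonzero orthogonal projector `P` and symmetric `H`: if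
`σ ≥ ‖P(H − σI)‖₂`, then `σ ≥ ½·max{λ_max(PHP), 0}`, where `λ_max(PHP)` is the largest
eigenvalue of `PHP` (formalized via `IsGreatest` of the set of eigenvalues). -/
theorem fletcher_threshold_from_norm_bound
    {n : ℕ} (P H : Matrix (Fin n) (Fin n) ℝ)
    (hP0 : P ≠ 0) (hPsymm : P.IsSymm) (hPproj : P * P = P) (hHsymm : H.IsSymm)
    (σ μ : ℝ)
    (hμ : IsGreatest {r : ℝ | ∃ v : Fin n → ℝ, v ≠ 0 ∧ (P * H * P).mulVec v = r • v} μ)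
    (hσ : opNorm2 (P * (H - σ • 1)) ≤ σ) :
    max μ 0 / 2 ≤ σ :=
  fletcher_threshold_from_norm_bound_general P H hPproj σ μ hμ hσ
end

section
/- Let S ⊂ ℝⁿ be compact, let f : ℝⁿ → ℝ and c : ℝⁿ → ℝᵐ be twice continuously differentiable, write g(x) = ∇f(x) and A(x) = ∇c(x) (the n×m matrix whose columns are ∇c_i(x)), and suppose there is λ > 0 with σ_min(A(x)) ≥ λ for all x ∈ S. Fix σ ≥ 0 and define y_σ(x) = (A(x)ᵀA(x))⁻¹(A(x)ᵀg(x) − σc(x)) and φ_{σ,ρ}(x) = f(x) − c(x)ᵀy_σ(x) + (ρ/2)‖c(x)‖². Then there exists ρ*(σ) > 0 such that for all ρ > ρ*(σ): if x̄ ∈ S and ∇φ_{σ,ρ}(x̄) = 0, then c(x̄) = 0 and g(x̄) = A(x̄) y_σ(x̄), i.e., x̄ is a first-order KKT point of minimizing f subject to c(x) = 0. -/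
open Matrix
open scoped RealInnerProductSpace

/-!
Test the stationarity condition `∇φ_{σ,ρ}(x̄) = 0` against the direction `w = A c`. The normal
equations `AᵀA y_σ = Aᵀ g - σ c` cancel the terms in `g` and `y_σ`, leaving
`σ ‖c‖² + ρ ‖w‖² = ⟪c, y_σ'(x̄) w⟫ ≤ G ‖c‖ ‖w‖ ≤ (G / λ) ‖w‖²`, where `G` bounds `‖y_σ'‖`
on `S`: `AᵀA` is invertible on a neighbourhood of the compact set `S`, so `y_σ` is `C¹` there. Hence
`ρ > G / λ` forces `w = 0`, so `c = 0` because `σ_min(A) ≥ λ`, and the stationarity condition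
collapses to `g = A y_σ`.
-/

section MatrixCalculus

variable {𝕜 E ι : Type*} [NontriviallyNormedField 𝕜] [NormedAddCommGroup E]
  [NormedSpace 𝕜 E] [Fintype ι] [DecidableEq ι] {k : WithTop ℕ∞} {M : E → Matrix ι ι 𝕜}

theorem ContDiff.matrix_det (hM : ∀ i j, ContDiff 𝕜 k fun x => M x i j) :
    ContDiff 𝕜 k fun x => (M x).det := by
  simp_rw [det_apply']
  exact ContDiff.sum fun σ _ => contDiff_const.mul (contDiff_prod fun i _ => hM (σ i) i)

theorem ContDiff.matrix_adjugate_apply (hM : ∀ i j, ContDiff 𝕜 k fun x => M x i j) (i j : ι) :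
    ContDiff 𝕜 k fun x => (M x).adjugate i j := by
  simp_rw [adjugate_apply]
  refine ContDiff.matrix_det fun r s => ?_
  simp only [updateRow_apply]
  split_ifs
  exacts [contDiff_const, hM r s]

theorem ContDiffOn.matrix_inv_mulVec_apply {b : E → ι → 𝕜}
    (hM : ∀ i j, ContDiff 𝕜 k fun x => M x i j) (hb : ∀ i, ContDiff 𝕜 k fun x => b x i)
    (i : ι) :
    ContDiffOn 𝕜 k (fun x => ((M x)⁻¹ *ᵥ b x) i) {x | (M x).det ≠ 0} := by
  simp_rw [inv_def, Ring.inverse_eq_inv', smul_mulVec, Pi.smul_apply, smul_eq_mul, mulVec,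
    dotProduct]
  refine ((ContDiff.matrix_det hM).contDiffOn.inv fun x hx => hx).mul ?_
  exact (ContDiff.sum fun j _ => (ContDiff.matrix_adjugate_apply hM i j).mul (hb j)).contDiffOn

end MatrixCalculus

theorem ContDiff.gradient {E : Type*} [NormedAddCommGroup E] [InnerProductSpace ℝ E]
    [CompleteSpace E] {f : E → ℝ} {k : WithTop ℕ∞} (hf : ContDiff ℝ (k + 1) f) :
    ContDiff ℝ k (gradient f) :=
  (InnerProductSpace.toDual ℝ E).symm.contDiff.comp (hf.fderiv_right le_rfl)

theorem EuclideanSpace.norm_toLp_eq_sqrt_dotProduct {ι : Type*} [Fintype ι] (v : ι → ℝ) :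
    ‖(WithLp.toLp 2 v : EuclideanSpace ℝ ι)‖ = √(v ⬝ᵥ v) := by
  rw [norm_eq_sqrt_real_inner, EuclideanSpace.inner_toLp_toLp, star_trivial]

theorem Matrix.mulVec_injective_of_sqrt_dotProduct_le {ι κ : Type*} [Fintype ι] [Fintype κ]
    {A : Matrix ι κ ℝ} {lam : ℝ} (hlam : 0 < lam)
    (h : ∀ v, lam * √(v ⬝ᵥ v) ≤ √(A *ᵥ v ⬝ᵥ A *ᵥ v)) : Function.Injective A.mulVec := by
  refine (injective_iff_map_eq_zero A.mulVecLin).2 fun v hv => ?_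
  have hv' := h v
  rw [show A *ᵥ v = 0 from hv, dotProduct_zero, Real.sqrt_zero,
    ← EuclideanSpace.norm_toLp_eq_sqrt_dotProduct] at hv'
  simpa using le_antisymm (nonpos_of_mul_nonpos_right hv' hlam) (norm_nonneg _)

theorem Matrix.det_transpose_mul_self_pos {ι κ : Type*} [Fintype ι] [Fintype κ]
    [DecidableEq κ] {A : Matrix ι κ ℝ} (hA : Function.Injective A.mulVec) : 0 < (Aᵀ * A).det := by
  rw [← conjTranspose_eq_transpose_of_trivial]
  exact (PosDef.conjTranspose_mul_self A hA).det_pos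

section LeastSquares

variable {ι κ : Type*} [Fintype ι] [Fintype κ] [DecidableEq κ]

/-- `y_σ(x)` of the paper, for `A = A(x)`, `g = ∇f(x)` and `c = c(x)`. -/
noncomputable def leastSquaresMultiplier (A : Matrix ι κ ℝ) (g : ι → ℝ) (c : κ → ℝ) (σ : ℝ) :
    κ → ℝ :=
  (Aᵀ * A)⁻¹ *ᵥ (Aᵀ *ᵥ g - σ • c)

theorem transpose_mulVec_mulVec_leastSquaresMultiplier {A : Matrix ι κ ℝ} (g : ι → ℝ)
    (c : κ → ℝ) (σ : ℝ) (hA : IsUnit (Aᵀ * A).det) :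
    Aᵀ *ᵥ (A *ᵥ leastSquaresMultiplier A g c σ) = Aᵀ *ᵥ g - σ • c := by
  rw [leastSquaresMultiplier, mulVec_mulVec, mulVec_mulVec, mul_nonsing_inv _ hA, one_mulVec]

theorem contDiffOn_leastSquaresMultiplier {E : Type*} [NormedAddCommGroup E] [NormedSpace ℝ E]
    {A : E → Matrix ι κ ℝ} {g : E → ι → ℝ} {c : E → κ → ℝ} {k : WithTop ℕ∞}
    (hA : ∀ i j, ContDiff ℝ k fun x => A x i j) (hg : ∀ i, ContDiff ℝ k fun x => g x i)
    (hc : ∀ j, ContDiff ℝ k fun x => c x j) (σ : ℝ) :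
    ContDiffOn ℝ k
      (fun x => (WithLp.toLp 2 (leastSquaresMultiplier (A x) (g x) (c x) σ) :
        EuclideanSpace ℝ κ))
      {x | ((A x)ᵀ * A x).det ≠ 0} := by
  refine contDiffOn_euclidean.2 fun j => ContDiffOn.matrix_inv_mulVec_apply (fun r s => ?_)
    (fun r => ?_) j
  · simp only [mul_apply, transpose_apply]
    exact ContDiff.sum fun i _ => (hA i r).mul (hA i s)
  · simp only [Pi.sub_apply, Pi.smul_apply, smul_eq_mul, mulVec, dotProduct, transpose_apply]
    exact (ContDiff.sum fun i _ => (hA i r).mul (hg i)).sub (contDiff_const.mul (hc r))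

end LeastSquares

section Penalty

open ContinuousLinearMap

variable {E F : Type*} [NormedAddCommGroup E] [InnerProductSpace ℝ E] [NormedAddCommGroup F]
  [InnerProductSpace ℝ F]

/-- `φ_{σ,ρ}` of the paper when `y = y_σ`. -/
noncomputable def quadraticPenalty (f : E → ℝ) (c y : E → F) (ρ : ℝ) (x : E) : ℝ :=
  f x - ⟪c x, y x⟫ + ρ / 2 * ‖c x‖ ^ 2

theorem inner_gradient_eq_of_gradient_quadraticPenalty_eq_zero [CompleteSpace E] {f : E → ℝ}
    {c y : E → F} {x : E} {J D : E →L[ℝ] F} {ρ : ℝ} (hf : DifferentiableAt ℝ f x)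
    (hc : HasFDerivAt c J x) (hy : HasFDerivAt y D x)
    (h0 : gradient (quadraticPenalty f c y ρ) x = 0) (v : E) :
    ⟪gradient f x, v⟫ = ⟪c x, D v⟫ + ⟪J v, y x⟫ - ρ * ⟪c x, J v⟫ := by
  have hφ : HasFDerivAt (quadraticPenalty f c y ρ) _ x :=
    ((hasGradientAt_iff_hasFDerivAt.1 hf.hasGradientAt).sub (hc.inner ℝ hy)).add
      (hc.norm_sq.const_mul (ρ / 2))
  have hφ0 := hasGradientAt_iff_hasFDerivAt.1 (h0 ▸ hφ.differentiableAt.hasGradientAt)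
  have h := congrArg (fun L => L v) (hφ.unique hφ0)
  simp only [map_zero, _root_.zero_apply, _root_.add_apply, _root_.sub_apply, _root_.smul_apply,
    InnerProductSpace.toDual_apply_apply, ContinuousLinearMap.comp_apply,
    ContinuousLinearMap.prod_apply, fderivInnerCLM_apply,
    innerSL_apply_apply, smul_eq_mul, nsmul_eq_mul] at h
  linarith

variable [CompleteSpace E] [CompleteSpace F]

theorem eq_zero_and_eq_adjoint_of_penalty_stationary (J D : E →L[ℝ] F) {g : E} {y c : F}
    {σ ρ lam G : ℝ} (hσ : 0 ≤ σ) (hlam : 0 < lam) (hc : lam * ‖c‖ ≤ ‖adjoint J c‖)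
    (hD : ‖D‖ ≤ G) (hρ : G / lam < ρ) (hnormal : J (adjoint J y) = J g - σ • c)
    (hstat : ∀ v, ⟪g, v⟫ = ⟪c, D v⟫ + ⟪J v, y⟫ - ρ * ⟪c, J v⟫) :
    c = 0 ∧ g = adjoint J y := by
  set w := adjoint J c
  have hbalance : σ * ‖c‖ ^ 2 + ρ * ‖w‖ ^ 2 = ⟪c, D w⟫ := by
    have hJwy : ⟪J w, y⟫ = ⟪g, w⟫ - σ * ‖c‖ ^ 2 := by
      rw [← adjoint_inner_right, adjoint_inner_left, hnormal, inner_sub_right, inner_smul_right,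
        real_inner_self_eq_norm_sq, ← adjoint_inner_left, real_inner_comm]
    have hcJw : ⟪c, J w⟫ = ‖w‖ ^ 2 := by
      rw [← adjoint_inner_left, real_inner_self_eq_norm_sq]
    have h := hstat w
    rw [hJwy, hcJw] at h
    linarith
  have hw : w = 0 := by
    by_contra hw
    have hc_le : ‖c‖ ≤ ‖w‖ / lam := by rw [le_div_iff₀ hlam]; linarith
    have : ρ * ‖w‖ ^ 2 ≤ G / lam * ‖w‖ ^ 2 :=
      calc ρ * ‖w‖ ^ 2 ≤ ⟪c, D w⟫ := by nlinarith [mul_nonneg hσ (sq_nonneg ‖c‖)]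
        _ ≤ ‖c‖ * (G * ‖w‖) :=
          (real_inner_le_norm _ _).trans
            (mul_le_mul_of_nonneg_left (D.le_of_opNorm_le hD w) (norm_nonneg c))
        _ ≤ ‖w‖ / lam * (G * ‖w‖) := by
          have : 0 ≤ G := (norm_nonneg D).trans hD
          gcongr
        _ = G / lam * ‖w‖ ^ 2 := by ring
    nlinarith [pow_pos (norm_pos_iff.2 hw) 2]
  have hc0 : c = 0 := by
    rw [hw, norm_zero] at hc
    exact norm_eq_zero.1 (le_antisymm (nonpos_of_mul_nonpos_right hc hlam) (norm_nonneg c))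
  refine ⟨hc0, ext_inner_right ℝ fun v => ?_⟩
  rw [hstat v, hc0, adjoint_inner_left, real_inner_comm (J v) y]
  simp

end Penalty

section Euclidean

variable {ι κ : Type*} [Fintype ι] [Fintype κ] [DecidableEq ι]

theorem fderiv_eq_toEuclideanLin_transpose {c : EuclideanSpace ℝ ι → EuclideanSpace ℝ κ}
    {x : EuclideanSpace ℝ ι} {A : Matrix ι κ ℝ} (hc : DifferentiableAt ℝ c x)
    (hA : ∀ i j, A i j = gradient (fun z => c z j) x i) :
    fderiv ℝ c x = (toEuclideanLin Aᵀ).toContinuousLinearMap := by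
  ext v j
  have hcj := (EuclideanSpace.proj (𝕜 := ℝ) j).hasFDerivAt.comp x hc.hasFDerivAt
  calc fderiv ℝ c x v j = fderiv ℝ (fun z => c z j) x v := by
        rw [show (fun z => c z j) = EuclideanSpace.proj j ∘ c from rfl, hcj.fderiv]; rfl
    _ = ⟪gradient (fun z => c z j) x, v⟫ := (InnerProductSpace.toDual_symm_apply).symm
    _ = toEuclideanLin Aᵀ v j := by
      rw [EuclideanSpace.inner_eq_star_dotProduct, toLpLin_apply]
      simp only [star_trivial, mulVec, dotProduct, transpose_apply, hA, mul_comm]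

variable [DecidableEq κ]

theorem adjoint_fderiv_eq_toEuclideanLin {c : EuclideanSpace ℝ ι → EuclideanSpace ℝ κ}
    {x : EuclideanSpace ℝ ι} {A : Matrix ι κ ℝ} (hc : DifferentiableAt ℝ c x)
    (hA : ∀ i j, A i j = gradient (fun z => c z j) x i) :
    ContinuousLinearMap.adjoint (fderiv ℝ c x) = (toEuclideanLin A).toContinuousLinearMap := by
  rw [fderiv_eq_toEuclideanLin_transpose hc hA, ← LinearMap.adjoint_toContinuousLinearMap,
    ← toEuclideanLin_conjTranspose_eq_adjoint, conjTranspose_eq_transpose_of_trivial,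
    transpose_transpose]

theorem kkt_of_gradient_quadraticPenalty_eq_zero {f : EuclideanSpace ℝ ι → ℝ}
    {c y : EuclideanSpace ℝ ι → EuclideanSpace ℝ κ} {x : EuclideanSpace ℝ ι} {A : Matrix ι κ ℝ}
    {D : EuclideanSpace ℝ ι →L[ℝ] EuclideanSpace ℝ κ} {σ ρ lam G : ℝ}
    (hf : DifferentiableAt ℝ f x) (hc : DifferentiableAt ℝ c x)
    (hA : ∀ i j, A i j = gradient (fun z => c z j) x i) (hσ : 0 ≤ σ) (hlam : 0 < lam)
    (hsmin : ∀ v, lam * √(v ⬝ᵥ v) ≤ √(A *ᵥ v ⬝ᵥ A *ᵥ v))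
    (hyx : y x = WithLp.toLp 2 (leastSquaresMultiplier A (gradient f x).ofLp (c x).ofLp σ))
    (hy : HasFDerivAt y D x) (hD : ‖D‖ ≤ G) (hρ : G / lam < ρ)
    (h0 : gradient (quadraticPenalty f c y ρ) x = 0) :
    c x = 0 ∧ (gradient f x).ofLp = A *ᵥ (y x).ofLp := by
  have hJ := fderiv_eq_toEuclideanLin_transpose hc hA
  have hJadj := adjoint_fderiv_eq_toEuclideanLin hc hA
  have hlow : lam * ‖c x‖ ≤ ‖ContinuousLinearMap.adjoint (fderiv ℝ c x) (c x)‖ := by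
    have h := hsmin (c x).ofLp
    rw [← EuclideanSpace.norm_toLp_eq_sqrt_dotProduct,
      ← EuclideanSpace.norm_toLp_eq_sqrt_dotProduct, WithLp.toLp_ofLp] at h
    rwa [hJadj]
  have hunit : IsUnit (Aᵀ * A).det :=
    (det_transpose_mul_self_pos (mulVec_injective_of_sqrt_dotProduct_le hlam hsmin)).ne'.isUnit
  have hnormal : fderiv ℝ c x (ContinuousLinearMap.adjoint (fderiv ℝ c x) (y x)) =
      fderiv ℝ c x (gradient f x) - σ • c x := by
    rw [hJadj, hJ, hyx]
    exact congrArg _ (transpose_mulVec_mulVec_leastSquaresMultiplier _ _ σ hunit)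
  obtain ⟨hc0, hg⟩ := eq_zero_and_eq_adjoint_of_penalty_stationary _ _ hσ hlam hlow hD hρ
    hnormal (inner_gradient_eq_of_gradient_quadraticPenalty_eq_zero hf hc.hasFDerivAt hy h0)
  exact ⟨hc0, by rw [hg, hJadj]; rfl⟩

end Euclidean

/-- Theorem 3.2, threshold penalty value for the quadratic penalty.
On a compact set `S` where the smallest singular value of the constraint Jacobian `A(x)` is
bounded below by `λ > 0`, for any fixed `σ ≥ 0` there exists `ρ*(σ) > 0` such that for all
`ρ > ρ*(σ)`, every stationary point `x̄ ∈ S` of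
`φ_{σ,ρ}(x) = f(x) − c(x)ᵀ y_σ(x) + (ρ/2)‖c(x)‖²` is a first-order KKT point of
`min f(x) s.t. c(x) = 0`, i.e. `c(x̄) = 0` and `∇f(x̄) = A(x̄) y_σ(x̄)`. -/
theorem quadratic_penalty_threshold
    {n m : ℕ}
    (S : Set (EuclideanSpace ℝ (Fin n))) (hS : IsCompact S)
    (f : EuclideanSpace ℝ (Fin n) → ℝ) (hf : ContDiff ℝ 2 f)
    (c : EuclideanSpace ℝ (Fin n) → EuclideanSpace ℝ (Fin m)) (hc : ContDiff ℝ 2 c)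
    (A : EuclideanSpace ℝ (Fin n) → Matrix (Fin n) (Fin m) ℝ)
    (hA : ∀ x, ∀ i : Fin n, ∀ j : Fin m, A x i j = gradient (fun z => c z j) x i)
    (lam : ℝ) (hlam : 0 < lam)
    (hsmin : ∀ x ∈ S, ∀ v : Fin m → ℝ,
      lam * Real.sqrt (v ⬝ᵥ v) ≤ Real.sqrt ((A x).mulVec v ⬝ᵥ (A x).mulVec v))
    (σ : ℝ) (hσ : 0 ≤ σ)
    (yσ : EuclideanSpace ℝ (Fin n) → Fin m → ℝ)
    (hyσ : ∀ x, yσ x =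
      ((A x)ᵀ * A x)⁻¹.mulVec ((A x)ᵀ.mulVec (fun i => gradient f x i) - σ • fun j => c x j))
    (φ : ℝ → EuclideanSpace ℝ (Fin n) → ℝ)
    (hφ : ∀ ρ x, φ ρ x = f x - (fun j => c x j) ⬝ᵥ yσ x + ρ / 2 * ‖c x‖ ^ 2) :
    ∃ ρstar : ℝ, 0 < ρstar ∧
      ∀ ρ : ℝ, ρstar < ρ →
        ∀ xbar ∈ S, gradient (φ ρ) xbar = 0 →
          c xbar = 0 ∧ gradient f xbar = (A xbar).mulVec (yσ xbar) := by
  have hAC : ∀ i j, ContDiff ℝ 1 fun x => A x i j := fun i j => by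
    simp only [hA]
    exact contDiff_euclidean.1 (contDiff_euclidean.1 hc j).gradient i
  have hAcont : Continuous A :=
    continuous_pi fun i => continuous_pi fun j => (hAC i j).continuous
  set U := {x | ((A x)ᵀ * A x).det ≠ 0}
  have hU : IsOpen U :=
    isOpen_ne_fun (hAcont.matrix_transpose.matrix_mul hAcont).matrix_det continuous_const
  have hSU : S ⊆ U := fun x hx =>
    (det_transpose_mul_self_pos (mulVec_injective_of_sqrt_dotProduct_le hlam (hsmin x hx))).ne'
  set y := fun x => (WithLp.toLp 2 (yσ x) : EuclideanSpace ℝ (Fin m))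
  have hy : y = fun x =>
      WithLp.toLp 2 (leastSquaresMultiplier (A x) (gradient f x).ofLp (c x).ofLp σ) :=
    funext fun x => congrArg (WithLp.toLp 2) (hyσ x)
  have hyC : ContDiffOn ℝ 1 y U := by
    rw [hy]
    exact contDiffOn_leastSquaresMultiplier hAC (contDiff_euclidean.1 hf.gradient)
      (fun j => (contDiff_euclidean.1 hc j).of_le one_le_two) σ
  obtain ⟨G, hG⟩ :=
    hS.exists_bound_of_continuousOn ((hyC.continuousOn_fderiv_of_isOpen hU le_rfl).mono hSU)
  refine ⟨max 1 (G / lam), by positivity, fun ρ hρ xbar hx h0 => ?_⟩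
  have hφρ : φ ρ = quadraticPenalty f c y ρ := funext fun z => by
    rw [hφ, quadraticPenalty, EuclideanSpace.inner_eq_star_dotProduct, star_trivial,
      dotProduct_comm]
  exact kkt_of_gradient_quadraticPenalty_eq_zero (hf.differentiable two_ne_zero xbar)
    (hc.differentiable two_ne_zero xbar) (hA xbar) hσ hlam (hsmin xbar hx) (congrFun hy xbar)
    ((hyC.differentiableOn one_ne_zero).differentiableAt (hU.mem_nhds (hSU hx))).hasFDerivAt
    (hG xbar hx) ((le_max_right _ _).trans_lt hρ) (hφρ ▸ h0)
end

section
/- Let A be a real n×m matrix with full column rank m, Y a real n×m matrix, g ∈ ℝⁿ, c ∈ ℝᵐ, y ∈ ℝᵐ, and ρ > 0. Suppose AᵀA y = Aᵀg (the normal equations with σ = 0) and g − A y − Y c = ρ A c (stationarity of the penalty φ_{0,ρ}). If ρ > ‖A†Y‖₂ where A† = (AᵀA)⁻¹Aᵀ, then c = 0 and g = A y. -/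
/-!
Multiplying the stationarity equation by the left inverse `A† = (AᵀA)⁻¹Aᵀ` of `A` and using the
normal equations `A†g = y` leaves `(A†Y) c = -ρ c`. An eigenvalue of `A†Y` is bounded in modulus
by `‖A†Y‖₂ < ρ`, so `c = 0`, and the stationarity equation then reads `g = Ay`.
-/

open Matrix

theorem ContinuousLinearMap.eq_zero_of_apply_eq_smul_of_norm_lt {𝕜 E : Type*}
    [NontriviallyNormedField 𝕜] [NormedAddCommGroup E] [NormedSpace 𝕜 E] {T : E →L[𝕜] E}
    {v : E} {μ : 𝕜} (hv : T v = μ • v) (hT : ‖T‖ < ‖μ‖) : v = 0 := by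
  by_contra hv0
  have : ‖μ‖ * ‖v‖ ≤ ‖T‖ * ‖v‖ := by
    simpa only [hv, norm_smul] using T.le_opNorm v
  exact (le_of_mul_le_mul_right this (norm_pos_iff.mpr hv0)).not_gt hT

namespace Matrix

theorem isUnit_of_rank_eq_card {m K : Type*} [Fintype m] [DecidableEq m] [Field K]
    {A : Matrix m m K} (hA : A.rank = Fintype.card m) : IsUnit A := by
  rw [← mulVec_surjective_iff_isUnit, ← coe_mulVecLin, ← LinearMap.range_eq_top]
  apply Submodule.eq_top_of_finrank_eq
  rwa [Module.finrank_fintype_fun_eq_card]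

theorem eq_zero_of_mulVec_eq_smul_of_opNorm2_lt_s7 {m : ℕ} {M : Matrix (Fin m) (Fin m) ℝ}
    {v : Fin m → ℝ} {μ : ℝ} (hv : M *ᵥ v = μ • v) (hM : opNorm2 M < |μ|) : v = 0 := by
  have hT : LinearMap.toContinuousLinearMap (toEuclideanLin M) (WithLp.toLp 2 v) =
      μ • WithLp.toLp 2 v :=
    congrArg (WithLp.toLp 2) hv
  simpa using ContinuousLinearMap.eq_zero_of_apply_eq_smul_of_norm_lt hT hM

theorem mulVec_eq_neg_smul_of_sub_sub_eq_smul {m n R : Type*} [Fintype m] [Fintype n]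
    [DecidableEq m] [CommRing R] {A Y : Matrix n m R} {B : Matrix m n R} {g : n → R}
    {c y : m → R} {ρ : R} (hBA : B * A = 1) (hBg : B *ᵥ g = y)
    (hstat : g - A *ᵥ y - Y *ᵥ c = ρ • A *ᵥ c) : (B * Y) *ᵥ c = (-ρ) • c := by
  have h := congrArg (B *ᵥ ·) hstat
  simp only [mulVec_sub, mulVec_smul, mulVec_mulVec, hBA, hBg, one_mulVec] at h
  rw [neg_smul, ← h]
  abel

end Matrix

theorem quadratic_penalty_stationary_implies_feasible_general
    {n m : ℕ} (A Y : Matrix (Fin n) (Fin m) ℝ) (hA : A.rank = m)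
    (g : Fin n → ℝ) (c y : Fin m → ℝ) (ρ : ℝ)
    (hnormal : (Aᵀ * A).mulVec y = Aᵀ.mulVec g)
    (hstat : g - A.mulVec y - Y.mulVec c = ρ • A.mulVec c)
    (hbig : opNorm2 ((Aᵀ * A)⁻¹ * Aᵀ * Y) < ρ) :
    c = 0 ∧ g = A.mulVec y := by
  have hdet : IsUnit (Aᵀ * A).det := (isUnit_iff_isUnit_det _).mp <|
    isUnit_of_rank_eq_card (by rw [rank_transpose_mul_self, hA, Fintype.card_fin])
  have hleft_inv : (Aᵀ * A)⁻¹ * Aᵀ * A = 1 := by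
    rw [Matrix.mul_assoc, nonsing_inv_mul _ hdet]
  have hy : ((Aᵀ * A)⁻¹ * Aᵀ) *ᵥ g = y := by
    rw [← mulVec_mulVec, ← hnormal, mulVec_mulVec, nonsing_inv_mul _ hdet, one_mulVec]
  have hc : c = 0 :=
    eq_zero_of_mulVec_eq_smul_of_opNorm2_lt_s7 (mulVec_eq_neg_smul_of_sub_sub_eq_smul hleft_inv hy hstat)
      (hbig.trans_le (by rw [abs_neg]; exact le_abs_self ρ))
  refine ⟨hc, ?_⟩
  simpa [hc, sub_eq_zero] using hstat

/-- first part of Theorem 3.3. If `A` has full column rank,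
`AᵀA y = Aᵀg` (normal equations with `σ = 0`), `g − Ay − Yc = ρ Ac` (stationarity of
`φ_{0,ρ}`), and `ρ > ‖A†Y‖₂` with `A† = (AᵀA)⁻¹Aᵀ`, then `c = 0` and `g = Ay`. -/
theorem quadratic_penalty_stationary_implies_feasible
    {n m : ℕ} (A Y : Matrix (Fin n) (Fin m) ℝ) (hA : A.rank = m)
    (g : Fin n → ℝ) (c y : Fin m → ℝ) (ρ : ℝ) (hρ : 0 < ρ)
    (hnormal : (Aᵀ * A).mulVec y = Aᵀ.mulVec g)
    (hstat : g - A.mulVec y - Y.mulVec c = ρ • A.mulVec c)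
    (hbig : opNorm2 ((Aᵀ * A)⁻¹ * Aᵀ * Y) < ρ) :
    c = 0 ∧ g = A.mulVec y :=
  quadratic_penalty_stationary_implies_feasible_general A Y hA g c y ρ hnormal hstat hbig
end

section
/- Let A be a real n×m matrix with full column rank m, H a symmetric n×n matrix, and ρ ∈ ℝ. Define P = A(AᵀA)⁻¹Aᵀ, P̄ = I − P, and A† = (AᵀA)⁻¹Aᵀ. Assume P̄ H P̄ is positive semidefinite. Then the matrix P̄ H P̄ − P H P + ρ A Aᵀ is positive semidefinite if and only if ρ ≥ λ_max(A† H (A†)ᵀ), where λ_max denotes the largest eigenvalue of the symmetric m×m matrix A† H (A†)ᵀ. -/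
/-!
Write `M = A† H A†ᵀ`. Since `P = A A† = A†ᵀ Aᵀ`, the matrix in question splits as
`P̄ H P̄ + A (ρ I − M) Aᵀ`. The congruence by `A†` kills the first summand (`A† P̄ = 0`) and turns
the second into `ρ I − M` (`A† A = I`), so the sum is positive semidefinite exactly when
`ρ I − M` is, i.e. when every eigenvalue of `M` is at most `ρ`.
-/

open Matrix

namespace Matrix

variable {m n R : Type*} [Fintype m] [Fintype n]

theorem isUnit_of_rank_eq_card_s8 [Field R] [DecidableEq n] {M : Matrix n n R}
    (h : M.rank = Fintype.card n) : IsUnit M := by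
  refine mulVec_surjective_iff_isUnit.mp fun y => ?_
  have hrange : LinearMap.range M.mulVecLin = ⊤ :=
    Submodule.eq_top_of_finrank_eq (by rw [← rank, h, Module.finrank_fintype_fun_eq_card])
  exact LinearMap.range_eq_top.mp hrange y

theorem isUnit_transpose_mul_self_of_rank_eq [Field R] [LinearOrder R] [IsStrictOrderedRing R]
    [DecidableEq n] {A : Matrix m n R} (h : A.rank = Fintype.card n) : IsUnit (Aᵀ * A) :=
  isUnit_of_rank_eq_card_s8 (by rw [rank_transpose_mul_self, h])

theorem posSemidef_add_mul_mul_conjTranspose_iff [Ring R] [PartialOrder R] [StarRing R]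
    [AddLeftMono R] [DecidableEq m] {Q : Matrix n n R} {B : Matrix n m R} {C : Matrix m n R}
    {N : Matrix m m R} (hQ : Q.PosSemidef) (hCQ : C * Q = 0) (hCB : C * B = 1) :
    (Q + B * N * Bᴴ).PosSemidef ↔ N.PosSemidef := by
  refine ⟨fun h => ?_, fun hN => hQ.add (hN.mul_mul_conjTranspose_same B)⟩
  have hcongr : C * (Q + B * N * Bᴴ) * Cᴴ = N := calc
    _ = (C * B) * N * (C * B)ᴴ := by
      simp only [Matrix.mul_add, hCQ, zero_add, conjTranspose_mul, Matrix.mul_assoc]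
    _ = N := by rw [hCB, conjTranspose_one, Matrix.one_mul, Matrix.mul_one]
  exact hcongr ▸ h.mul_mul_conjTranspose_same C

variable [DecidableEq n]

theorem smul_one_sub_mulVec_eq_smul_iff [CommRing R] (M : Matrix n n R) (c r : R) (v : n → R) :
    (c • (1 : Matrix n n R) - M) *ᵥ v = r • v ↔ M *ᵥ v = (c - r) • v := by
  rw [sub_mulVec, smul_mulVec, one_mulVec, sub_smul, sub_eq_iff_eq_add, ← sub_eq_iff_eq_add',
    eq_comm]

theorem IsHermitian.posSemidef_smul_one_sub_iff {M : Matrix n n ℝ} (hM : M.IsHermitian)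
    {μ : ℝ} (hμ : IsGreatest {r : ℝ | ∃ v : n → ℝ, v ≠ 0 ∧ M *ᵥ v = r • v} μ) (c : ℝ) :
    (c • (1 : Matrix n n ℝ) - M).PosSemidef ↔ μ ≤ c := by
  have hN : (c • (1 : Matrix n n ℝ) - M).IsHermitian :=
    IsHermitian.sub (by simp [IsHermitian]) hM
  constructor
  · intro h
    obtain ⟨v, hv, hMv⟩ := hμ.1
    have hNv := (smul_one_sub_mulVec_eq_smul_iff M c (c - μ) v).mpr (by rwa [sub_sub_cancel])
    have hquad := h.dotProduct_mulVec_nonneg v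
    rw [hNv, dotProduct_smul, smul_eq_mul] at hquad
    exact sub_nonneg.mp (nonneg_of_mul_nonneg_left hquad (dotProduct_star_self_pos_iff.mpr hv))
  · intro hμc
    refine hN.posSemidef_iff_eigenvalues_nonneg.mpr fun i => ?_
    have hw : ⇑(hN.eigenvectorBasis i) ≠ 0 := fun h =>
      hN.eigenvectorBasis.orthonormal.ne_zero i (by ext j; exact congrFun h j)
    have hMw := (smul_one_sub_mulVec_eq_smul_iff M c _ _).mp (hN.mulVec_eigenvectorBasis i)
    show 0 ≤ hN.eigenvalues i
    linarith [hμ.2 ⟨_, hw, hMw⟩]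

end Matrix

/-- algebraic content of Theorem 3.3, (16-2). With `P = A(AᵀA)⁻¹Aᵀ`,
`P̄ = I − P`, `A† = (AᵀA)⁻¹Aᵀ`, `A` of full column rank, `H` symmetric and `P̄ H P̄ ⪰ 0`:
`P̄ H P̄ − P H P + ρ A Aᵀ ⪰ 0` if and only if `ρ ≥ λ_max(A† H (A†)ᵀ)` (the largest
eigenvalue, formalized via `IsGreatest` of the eigenvalue set). -/
theorem quadratic_penalty_psd_threshold
    {n m : ℕ} (A : Matrix (Fin n) (Fin m) ℝ) (hA : A.rank = m)
    (H : Matrix (Fin n) (Fin n) ℝ) (hHsymm : H.IsSymm) (ρ : ℝ)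
    (P Pbar : Matrix (Fin n) (Fin n) ℝ) (Adag : Matrix (Fin m) (Fin n) ℝ)
    (hP : P = A * (Aᵀ * A)⁻¹ * Aᵀ) (hPbar : Pbar = 1 - P)
    (hAdag : Adag = (Aᵀ * A)⁻¹ * Aᵀ)
    (hPSD : (Pbar * H * Pbar).PosSemidef)
    (μ : ℝ)
    (hμ : IsGreatest {r : ℝ | ∃ v : Fin m → ℝ, v ≠ 0 ∧ (Adag * H * Adagᵀ).mulVec v = r • v} μ) :
    (Pbar * H * Pbar - P * H * P + ρ • (A * Aᵀ)).PosSemidef ↔ μ ≤ ρ := by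
  have hdet : IsUnit (Aᵀ * A).det := (isUnit_iff_isUnit_det _).mp
    (isUnit_transpose_mul_self_of_rank_eq (by rw [hA, Fintype.card_fin]))
  have hAdagA : Adag * A = 1 := by rw [hAdag, Matrix.mul_assoc, nonsing_inv_mul _ hdet]
  have hP_left : P = A * Adag := by rw [hP, hAdag, Matrix.mul_assoc]
  have hP_right : P = Adagᵀ * Aᵀ := by
    rw [hP, hAdag, transpose_mul, transpose_nonsing_inv, transpose_mul, transpose_transpose]
  have hAdagPbar : Adag * Pbar = 0 := by
    rw [hPbar, hP_left, Matrix.mul_sub, Matrix.mul_one, ← Matrix.mul_assoc, hAdagA,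
      Matrix.one_mul, sub_self]
  have hPHP : P * H * P = A * (Adag * H * Adagᵀ) * Aᵀ := by
    nth_rw 1 [hP_left]
    rw [hP_right]
    simp only [Matrix.mul_assoc]
  have hsplit : Pbar * H * Pbar - P * H * P + ρ • (A * Aᵀ)
      = Pbar * H * Pbar + A * (ρ • (1 : Matrix (Fin m) (Fin m) ℝ) - Adag * H * Adagᵀ) * Aᵀ := by
    rw [hPHP, Matrix.mul_sub, Matrix.sub_mul, Matrix.mul_smul, Matrix.smul_mul, Matrix.mul_one]
    abel
  have hM : (Adag * H * Adagᵀ).IsHermitian := by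
    simpa using isHermitian_mul_mul_conjTranspose Adag (isHermitian_iff_isSymm.mpr hHsymm)
  rw [hsplit, ← conjTranspose_eq_transpose_of_trivial A,
    Matrix.posSemidef_add_mul_mul_conjTranspose_iff hPSD
      (by rw [← Matrix.mul_assoc, ← Matrix.mul_assoc, hAdagPbar, Matrix.zero_mul, Matrix.zero_mul])
      hAdagA]
  exact hM.posSemidef_smul_one_sub_iff hμ ρ
end

section
/- Let φ : ℝⁿ × [0, 1] → ℝ be three times continuously differentiable, and suppose x* satisfies ∇_x φ(x*, 0) = 0 and ∇²_{xx} φ(x*, 0) positive definite. Suppose φ(x, δ) = φ(x, 0) + δ² P(x, δ) with P twice continuously differentiable. Let x(δ) denote the C¹ path of local minimizers of φ(·, δ) near x* (from the implicit function theorem) and let {G_δ}_{δ>0} be a family of maps G_δ : ℝⁿ → ℝⁿ for which there exist δ̄ > 0, an open set B containing x*, and M > 0 such that for all 0 < δ ≤ δ̄ and x̃₀ ∈ B, the sequence x̃_{k+1} = x̃_k + G_δ(x̃_k) satisfies ‖x(δ) − x̃_{k+1}‖ ≤ M‖x(δ) − x̃_k‖² for all k. Consider the sequence generated by δ_k = max{min{‖∇_x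 φ(x_k, δ_{k−1})‖, δ_{k−1}}, δ_{k−1}²} and x_{k+1} = x_k + G_{δ_k}(x_k). Then there exist an open set B′ containing x* and δ′ ∈ (0, 1) such that whenever x₁ ∈ B′, δ₀ ≤ δ′, and x_k → x*, the convergence is R-quadratic: there is a sequence α_k → 0 converging quadratically to zero with ‖x_k − x*‖ ≤ α_k for all sufficiently large k. -/
/-!
Write `aₖ = max ‖xₖ - x*‖ δₖ`. Since the Hessian `∇²ₓₓφ(x*, 0)` is positive definite, hence
injective, `‖x - x*‖ = O(‖∇ₓφ(x, 0)‖)` near `x*`; at `x = x(δ)` the splitting `φ = φ(·, 0) + δ²P`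
gives `∇ₓφ(x(δ), 0) = -δ² ∇ₓP(x(δ), δ)`, so `‖x(δ) - x*‖ = O(δ²)`. Therefore
`‖x(δₖ) - xₖ‖ = O(aₖ)`, one step of `G_{δₖ}` gives `‖x(δₖ) - xₖ₊₁‖ = O(aₖ²)`, and as `∇ₓφ(·, δₖ)`
is Lipschitz and vanishes at `x(δₖ)`, both `‖xₖ₊₁ - x*‖` and
`δₖ₊₁ ≤ max ‖∇ₓφ(xₖ₊₁, δₖ)‖ δₖ²` are `O(aₖ²)`. Once `aₖ` is small, `aₖ₊₁ ≤ c aₖ²` forces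
quadratic convergence of `aₖ` to `0`.
-/

open scoped RealInnerProductSpace NNReal

open Filter Topology Set Asymptotics InnerProductSpace

section PartialGradient

variable {E F : Type*} [NormedAddCommGroup E] [InnerProductSpace ℝ E] [CompleteSpace E]
  [NormedAddCommGroup F] [NormedSpace ℝ F]

/-- The paper's `∇ₓ f(x, y)`. -/
noncomputable def partialGradient (f : E × F → ℝ) (p : E × F) : E :=
  gradient (fun z => f (z, p.2)) p.1

theorem partialGradient_eq {f : E × F → ℝ} {p : E × F} (hf : DifferentiableAt ℝ f p) :
    partialGradient f p = (toDual ℝ E).symm ((fderiv ℝ f p).comp (.inl ℝ E F)) :=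
  congrArg (toDual ℝ E).symm
    (hf.hasFDerivAt.comp p.1 (hasFDerivAt_prodMk_left (𝕜 := ℝ) p.1 p.2)).fderiv

theorem contDiff_partialGradient {f : E × F → ℝ} {m n : WithTop ℕ∞} (hf : ContDiff ℝ n f)
    (hmn : m + 1 ≤ n) : ContDiff ℝ m (partialGradient f) := by
  have hfun : partialGradient f = fun p =>
      (toDual ℝ E).symm.toContinuousLinearEquiv
        ((ContinuousLinearMap.compL ℝ E (E × F) ℝ).flip (.inl ℝ E F) (fderiv ℝ f p)) :=
    funext fun p =>
      partialGradient_eq ((hf.of_le (le_add_self.trans hmn)).differentiable one_ne_zero p)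
  rw [hfun]
  exact (ContinuousLinearEquiv.contDiff _).comp
    ((ContinuousLinearMap.contDiff _).comp (hf.fderiv_right hmn))

theorem exists_lipschitzOnWith_partialGradient {f : E × F → ℝ} (hf : ContDiff ℝ 2 f)
    (x₀ : E) (y₀ : F) : ∃ K, ∃ u ∈ 𝓝 x₀, ∃ v ∈ 𝓝 y₀,
      ∀ y ∈ v, LipschitzOnWith K (fun x => partialGradient f (x, y)) u := by
  obtain ⟨K, t, ht, hK⟩ :=
    ((contDiff_partialGradient hf (by norm_num)).contDiffAt (x := (x₀, y₀))).exists_lipschitzOnWith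
  obtain ⟨u, hu, v, hv, huv⟩ := mem_nhds_prod_iff.1 ht
  refine ⟨K, u, hu, v, hv, fun y hy => ?_⟩
  have h := hK.comp (LipschitzWith.prodMk_right y).lipschitzOnWith
    fun x hx => huv (mk_mem_prod hx hy)
  rw [mul_one] at h
  exact h

theorem exists_norm_partialGradient_le_of_tendsto {φ : E × F → ℝ} (hφ : ContDiff ℝ 2 φ)
    {x₀ : E} {y₀ : F} {xpath : F → E} (hlim : Tendsto xpath (𝓝 y₀) (𝓝 x₀))
    (hcrit : ∀ᶠ y in 𝓝 y₀, partialGradient φ (xpath y, y) = 0) :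
    ∃ L : ℝ≥0, ∃ u ∈ 𝓝 x₀, ∀ᶠ y in 𝓝 y₀, ∀ x ∈ u,
      ‖partialGradient φ (x, y)‖ ≤ L * ‖x - xpath y‖ := by
  obtain ⟨L, u, hu, v, hv, hLip⟩ := exists_lipschitzOnWith_partialGradient hφ x₀ y₀
  refine ⟨L, u, hu, ?_⟩
  filter_upwards [hcrit, hlim.eventually_mem hu, hv] with y hcrity hpu hyv x hxu
  have h := (hLip y hyv).norm_sub_le hxu hpu
  rwa [hcrity, sub_zero] at h

end PartialGradient

theorem isInducing_of_inner_pos {E : Type*} [NormedAddCommGroup E] [InnerProductSpace ℝ E]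
    [FiniteDimensional ℝ E] {H : E →L[ℝ] E}
    (hH : ∀ v ≠ 0, 0 < ⟪v, H v⟫) : IsInducing H := by
  refine (LinearMap.isClosedEmbedding_of_injective (f := (H : E →ₗ[ℝ] E)) ?_).isInducing
  refine LinearMap.ker_eq_bot'.2 fun v hv => ?_
  by_contra hne
  exact (hH v hne).ne' (by simp [show H v = 0 from hv])

section PathOfMinimizers

variable {E : Type*} [NormedAddCommGroup E] [InnerProductSpace ℝ E] [CompleteSpace E]

theorem partialGradient_eq_add_sq_smul {φ P : E × ℝ → ℝ} (hφ : Differentiable ℝ φ)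
    (hP : Differentiable ℝ P) (hdecomp : ∀ x δ, φ (x, δ) = φ (x, 0) + δ ^ 2 * P (x, δ))
    (x : E) (δ : ℝ) :
    partialGradient φ (x, δ) = partialGradient φ (x, 0) + δ ^ 2 • partialGradient P (x, δ) := by
  have hslice : ∀ (f : E × ℝ → ℝ), Differentiable ℝ f → ∀ t : ℝ,
      DifferentiableAt ℝ (fun z => f (z, t)) x := fun f hf t =>
    (hf _).comp x (differentiableAt_id.prodMk (differentiableAt_const t))
  simp only [partialGradient, gradient, funext fun z => hdecomp z δ]
  rw [fderiv_fun_add (hslice φ hφ 0) ((hslice P hP δ).const_mul _),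
    fderiv_const_mul (hslice P hP δ), map_add, map_smul]

theorem isBigO_sub_sq_of_partialGradient_eq_zero [FiniteDimensional ℝ E] {φ P : E × ℝ → ℝ}
    (hφ : ContDiff ℝ 2 φ) (hP : ContDiff ℝ 1 P)
    (hdecomp : ∀ x δ, φ (x, δ) = φ (x, 0) + δ ^ 2 * P (x, δ)) {x₀ : E}
    (hgrad0 : partialGradient φ (x₀, 0) = 0)
    (hpos : ∀ v ≠ 0, 0 < ⟪v, fderiv ℝ (fun x => partialGradient φ (x, 0)) x₀ v⟫)
    {xpath : ℝ → E} (hlim : Tendsto xpath (𝓝 0) (𝓝 x₀))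
    (hcrit : ∀ᶠ δ in 𝓝 0, partialGradient φ (xpath δ, δ) = 0) :
    (fun δ => xpath δ - x₀) =O[𝓝 0] fun δ => δ ^ 2 := by
  have hφ0 : Differentiable ℝ fun x => partialGradient φ (x, 0) :=
    ((contDiff_partialGradient hφ (by norm_num)).comp
      (contDiff_id.prodMk contDiff_const)).differentiable one_ne_zero
  have hsub : (fun x => x - x₀) =O[𝓝 x₀] fun x => partialGradient φ (x, 0) := by
    simpa [hgrad0] using
      ((hφ0 x₀).hasFDerivAt.isTheta_sub (isInducing_of_inner_pos hpos)).isBigO_symm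
  have hbdd : (fun δ => partialGradient P (xpath δ, δ)) =O[𝓝 0] fun _ => (1 : ℝ) :=
    (((contDiff_partialGradient (m := 0) hP (by norm_num)).continuous.tendsto _).comp
      (hlim.prodMk_nhds tendsto_id)).isBigO_one ℝ
  have hsplit : (fun δ => partialGradient φ (xpath δ, 0))
      =ᶠ[𝓝 0] fun δ => -(δ ^ 2 • partialGradient P (xpath δ, δ)) := by
    filter_upwards [hcrit] with δ hδ
    rw [partialGradient_eq_add_sq_smul (hφ.differentiable two_ne_zero)
      (hP.differentiable one_ne_zero) hdecomp] at hδ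
    exact eq_neg_of_add_eq_zero_left hδ
  refine (hsub.comp_tendsto hlim).trans (IsBigO.congr' ?_ hsplit.symm EventuallyEq.rfl)
  simpa using ((isBigO_refl (fun δ : ℝ => δ ^ 2) _).smul hbdd).neg_left

end PathOfMinimizers

theorem tendsto_zero_of_le_mul_sq {a : ℕ → ℝ} {c : ℝ} {K : ℕ} (hc : 0 < c) (ha : ∀ k, 0 ≤ a k)
    (hrec : ∀ k ≥ K, a (k + 1) ≤ c * a k ^ 2) (hK : c * a K < 1) :
    Tendsto a atTop (𝓝 0) := by
  set r := c * a K
  have hr : 0 ≤ r := mul_nonneg hc.le (ha K)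
  -- `c a` is squared at each step, so it decays at least geometrically with ratio `r`
  have hgeom : ∀ j, c * a (K + j) ≤ r ^ (j + 1) := by
    intro j
    induction j with
    | zero => simp [r]
    | succ j ih =>
      calc c * a (K + (j + 1)) ≤ c * (c * a (K + j) ^ 2) :=
            mul_le_mul_of_nonneg_left (hrec _ (Nat.le_add_right K j)) hc.le
        _ = (c * a (K + j)) ^ 2 := by ring
        _ ≤ (r ^ (j + 1)) ^ 2 := pow_le_pow_left₀ (mul_nonneg hc.le (ha _)) ih 2
        _ ≤ r ^ (j + 1 + 1) := by
          rw [← pow_mul, pow_succ r (j + 1)]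
          exact pow_le_pow_of_le_one hr hK.le (by omega) |>.trans_eq (pow_succ r (j + 1))
  have hbound : Tendsto (fun j => r ^ (j + 1) / c) atTop (𝓝 0) := by
    simpa using ((tendsto_pow_atTop_nhds_zero_of_lt_one hr hK).comp
      (tendsto_add_atTop_nat 1)).div_const c
  rw [← tendsto_add_atTop_iff_nat K]
  refine squeeze_zero (fun j => ha _) (fun j => ?_) hbound
  rw [le_div_iff₀ hc, mul_comm, add_comm]
  exact hgeom j

def ConvergesRQuadratically {E : Type*} [Norm E] [Sub E] (xs : ℕ → E) (x₀ : E) : Prop :=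
  ∃ α : ℕ → ℝ, Tendsto α atTop (𝓝 0) ∧
    (∃ c : ℝ, 0 < c ∧ ∃ K : ℕ, ∀ k ≥ K, α (k + 1) ≤ c * α k ^ 2) ∧
    ∃ K : ℕ, ∀ k ≥ K, ‖xs k - x₀‖ ≤ α k

theorem convergesRQuadratically_of_max_le {E : Type*} [SeminormedAddCommGroup E] {xs : ℕ → E}
    {x₀ : E} {ds : ℕ → ℝ} {c : ℝ} {K : ℕ} (hc : 0 < c) (hds : ∀ k, 0 ≤ ds k)
    (hstep : ∀ k ≥ K, max ‖xs (k + 1) - x₀‖ (ds (k + 1)) ≤ c * max ‖xs k - x₀‖ (ds k) ^ 2)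
    (hK : c * max ‖xs K - x₀‖ (ds K) < 1) : ConvergesRQuadratically xs x₀ :=
  ⟨fun k => max ‖xs k - x₀‖ (ds k),
    tendsto_zero_of_le_mul_sq hc (fun k => (hds k).trans (le_max_right _ _)) hstep hK,
    ⟨c, hc, K, hstep⟩, ⟨0, fun _ _ => le_max_left _ _⟩⟩

theorem max_min_sq_mem_Ioc {g d : ℝ} (hd : d ∈ Ioc 0 1) : max (min g d) (d ^ 2) ∈ Ioc 0 d :=
  ⟨lt_max_of_lt_right (pow_pos hd.1 2),
    max_le (min_le_right g d) (by nlinarith [hd.1, hd.2])⟩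

section Iteration

variable {E : Type*} [SeminormedAddCommGroup E]

theorem norm_sub_apply_le_of_iterate {T : E → E} {S : Set E} {p : E} {M : ℝ}
    (h : ∀ xt : ℕ → E, xt 0 ∈ S → (∀ k, xt (k + 1) = T (xt k)) →
      ∀ k, ‖p - xt (k + 1)‖ ≤ M * ‖p - xt k‖ ^ 2)
    {x : E} (hx : x ∈ S) : ‖p - T x‖ ≤ M * ‖p - x‖ ^ 2 :=
  h (fun k => T^[k] x) hx (fun k => Function.iterate_succ_apply' T k x) 0

theorem max_norm_sub_le_of_step {x x' p x₀ : E} {d d' γ C M L : ℝ} (hC : 0 ≤ C) (hM : 0 ≤ M)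
    (hL : 0 ≤ L) (hd : d ∈ Ioc 0 1) (hp : ‖p - x₀‖ ≤ C * d ^ 2)
    (hstep : ‖p - x'‖ ≤ M * ‖p - x‖ ^ 2) (hγ : γ ≤ L * ‖x' - p‖)
    (hd' : d' = max (min γ d) (d ^ 2)) :
    max ‖x' - x₀‖ d' ≤ ((L + 1) * M * (C + 1) ^ 2 + C + 1) * max ‖x - x₀‖ d ^ 2 := by
  set a := max ‖x - x₀‖ d
  have hda : d ≤ a := le_max_right _ _
  have hd2 : d ^ 2 ≤ a := by nlinarith [hd.1, hd.2]
  have hd2a : d ^ 2 ≤ a ^ 2 := pow_le_pow_left₀ hd.1.le hda 2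
  have hpx : ‖p - x‖ ≤ (C + 1) * a := by
    calc ‖p - x‖ ≤ ‖p - x₀‖ + ‖x - x₀‖ := norm_sub_le_norm_sub_add_norm_sub p x₀ x |>.trans_eq
            (by rw [norm_sub_rev x₀ x])
      _ ≤ C * a + a := add_le_add (hp.trans (mul_le_mul_of_nonneg_left hd2 hC)) (le_max_left _ _)
      _ = (C + 1) * a := by ring
  have hpx' : ‖p - x'‖ ≤ M * (C + 1) ^ 2 * a ^ 2 := by
    calc ‖p - x'‖ ≤ M * ‖p - x‖ ^ 2 := hstep
      _ ≤ M * ((C + 1) * a) ^ 2 := by gcongr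
      _ = M * (C + 1) ^ 2 * a ^ 2 := by ring
  have hMCa : 0 ≤ M * (C + 1) ^ 2 * a ^ 2 := by positivity
  refine max_le ?_ ?_
  · calc ‖x' - x₀‖ ≤ ‖p - x'‖ + ‖p - x₀‖ := norm_sub_le_norm_sub_add_norm_sub x' p x₀ |>.trans_eq
          (by rw [norm_sub_rev x' p])
      _ ≤ M * (C + 1) ^ 2 * a ^ 2 + C * a ^ 2 :=
          add_le_add hpx' (hp.trans (mul_le_mul_of_nonneg_left hd2a hC))
      _ ≤ ((L + 1) * M * (C + 1) ^ 2 + C + 1) * a ^ 2 := by nlinarith [sq_nonneg a]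
  · rw [hd']
    refine max_le ((min_le_left γ d).trans ?_) (hd2a.trans (by nlinarith [sq_nonneg a]))
    calc γ ≤ L * ‖x' - p‖ := hγ
      _ ≤ L * (M * (C + 1) ^ 2 * a ^ 2) := by rw [norm_sub_rev]; gcongr
      _ ≤ ((L + 1) * M * (C + 1) ^ 2 + C + 1) * a ^ 2 := by nlinarith [sq_nonneg a]

theorem exists_convergesRQuadratically {x₀ : E} {p : ℝ → E} {γ : ℝ → E → ℝ} {T : ℝ → E → E}
    {U V : Set E} {C M L : ℝ} (hU : U ∈ 𝓝 x₀) (hV : V ∈ 𝓝 x₀) (hC : 0 ≤ C) (hM : 0 ≤ M)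
    (hL : 0 ≤ L) (hp : ∀ᶠ δ in 𝓝[>] 0, ‖p δ - x₀‖ ≤ C * δ ^ 2)
    (hγ : ∀ᶠ δ in 𝓝[>] 0, ∀ x ∈ U, γ δ x ≤ L * ‖x - p δ‖)
    (hT : ∀ᶠ δ in 𝓝[>] 0, ∀ x ∈ V, ‖p δ - T δ x‖ ≤ M * ‖p δ - x‖ ^ 2) :
    ∃ δ' : ℝ, 0 < δ' ∧ δ' < 1 ∧ ∀ (xs : ℕ → E) (ds : ℕ → ℝ), 0 < ds 0 → ds 0 ≤ δ' →
      (∀ k : ℕ, 1 ≤ k → ds k = max (min (γ (ds (k - 1)) (xs k)) (ds (k - 1))) (ds (k - 1) ^ 2)) →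
      (∀ k : ℕ, 1 ≤ k → xs (k + 1) = T (ds k) (xs k)) →
      Tendsto xs atTop (𝓝 x₀) → ConvergesRQuadratically xs x₀ := by
  obtain ⟨ε, hε : 0 < ε, hsmall⟩ := mem_nhdsGT_iff_exists_Ioo_subset.1 (hp.and (hγ.and hT))
  set c := (L + 1) * M * (C + 1) ^ 2 + C + 1
  have hc : 1 ≤ c := by
    have : 0 ≤ (L + 1) * M * (C + 1) ^ 2 := by positivity
    linarith
  have hc0 : 0 < c := zero_lt_one.trans_le hc
  -- `δ' < ε` keeps every `δₖ` where the local estimates hold; `c δ' < 1` starts the recursion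
  set δ' := min (ε / 2) (1 / (2 * c))
  have hδ'ε : δ' < ε := (min_le_left _ _).trans_lt (half_lt_self hε)
  have hδ'c : δ' < 1 / c := (min_le_right _ _).trans_lt (by gcongr; linarith)
  have hδ'1 : δ' ≤ 1 := hδ'c.le.trans (div_le_one_of_le₀ hc hc0.le)
  refine ⟨δ', by positivity, hδ'c.trans_le (div_le_one_of_le₀ hc hc0.le), ?_⟩
  intro xs ds h0 h0' hds hxs hlim
  have hdsIoc : ∀ k, ds k ∈ Ioc 0 δ' := by
    intro k
    induction k with
    | zero => exact ⟨h0, h0'⟩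
    | succ k ih =>
      have h := max_min_sq_mem_Ioc (g := γ (ds k) (xs (k + 1))) ⟨ih.1, ih.2.trans hδ'1⟩
      rw [hds (k + 1) k.succ_pos]
      exact ⟨h.1, h.2.trans ih.2⟩
  have hIoo : ∀ k, ds k ∈ Ioo 0 ε := fun k => ⟨(hdsIoc k).1, (hdsIoc k).2.trans_lt hδ'ε⟩
  have hsmall' := fun k => hsmall (hIoo k)
  obtain ⟨K, hK⟩ := eventually_atTop.1 ((hlim.eventually
    (inter_mem (inter_mem hU hV) (Metric.ball_mem_nhds x₀ (one_div_pos.2 hc0)))).and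
    (eventually_ge_atTop 1))
  refine convergesRQuadratically_of_max_le (K := K) hc0
    (fun k => (hdsIoc k).1.le) (fun k hk => ?_) ?_
  · obtain ⟨⟨⟨-, hxV⟩, -⟩, hk1⟩ := hK k hk
    obtain ⟨⟨⟨hx'U, -⟩, -⟩, -⟩ := hK (k + 1) (by omega)
    refine max_norm_sub_le_of_step hC hM hL ⟨(hIoo k).1, (hdsIoc k).2.trans hδ'1⟩ (hsmall' k).1
      (by rw [hxs k hk1]; exact (hsmall' k).2.2 _ hxV) ((hsmall' k).2.1 _ hx'U)
      (hds (k + 1) k.succ_pos)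
  · have hxK : ‖xs K - x₀‖ < 1 / c := by simpa [dist_eq_norm] using (hK K le_rfl).1.2
    rw [← lt_div_iff₀' hc0]
    exact max_lt hxK ((hdsIoc K).2.trans_lt hδ'c)

end Iteration

theorem regularized_algorithm_R_quadratic_general
    {n : ℕ}
    (φ : EuclideanSpace ℝ (Fin n) × ℝ → ℝ) (hφ : ContDiff ℝ 3 φ)
    (P : EuclideanSpace ℝ (Fin n) × ℝ → ℝ) (hP : ContDiff ℝ 2 P)
    (hdecomp : ∀ x δ, φ (x, δ) = φ (x, 0) + δ ^ 2 * P (x, δ))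
    (xstar : EuclideanSpace ℝ (Fin n))
    (hgrad0 : gradient (fun z => φ (z, 0)) xstar = 0)
    (hpos : ∀ v : EuclideanSpace ℝ (Fin n), v ≠ 0 →
      0 < ⟪v, fderiv ℝ (gradient fun z => φ (z, (0 : ℝ))) xstar v⟫)
    -- the C¹ path of local minimizers from the implicit function theorem
    (xpath : ℝ → EuclideanSpace ℝ (Fin n)) (δpath : ℝ) (hδpath : 0 < δpath)
    (hxpath0 : xpath 0 = xstar)
    (hxpathC1 : ContDiffOn ℝ 1 xpath (Set.Ioo (-δpath) δpath))
    (hxpathcrit : ∀ δ : ℝ, |δ| < δpath → gradient (fun z => φ (z, δ)) (xpath δ) = 0)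
    -- the family of quadratically convergent update maps
    (G : ℝ → EuclideanSpace ℝ (Fin n) → EuclideanSpace ℝ (Fin n))
    (δbar : ℝ) (hδbar : 0 < δbar)
    (B : Set (EuclideanSpace ℝ (Fin n))) (hBopen : IsOpen B) (hxstarB : xstar ∈ B)
    (M : ℝ) (hM : 0 < M)
    (hG : ∀ δ : ℝ, 0 < δ → δ ≤ δbar →
      ∀ xt : ℕ → EuclideanSpace ℝ (Fin n), xt 0 ∈ B →
        (∀ k, xt (k + 1) = xt k + G δ (xt k)) →
        ∀ k, ‖xpath δ - xt (k + 1)‖ ≤ M * ‖xpath δ - xt k‖ ^ 2) :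
    ∃ B' : Set (EuclideanSpace ℝ (Fin n)), IsOpen B' ∧ xstar ∈ B' ∧
    ∃ δ' : ℝ, 0 < δ' ∧ δ' < 1 ∧
      ∀ (xs : ℕ → EuclideanSpace ℝ (Fin n)) (ds : ℕ → ℝ),
        xs 1 ∈ B' → 0 < ds 0 → ds 0 ≤ δ' →
        (∀ k : ℕ, 1 ≤ k → ds k =
          max (min ‖gradient (fun z => φ (z, ds (k - 1))) (xs k)‖ (ds (k - 1)))
            (ds (k - 1) ^ 2)) →
        (∀ k : ℕ, 1 ≤ k → xs (k + 1) = xs k + G (ds k) (xs k)) →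
        Filter.Tendsto xs Filter.atTop (nhds xstar) →
        ∃ α : ℕ → ℝ,
          Filter.Tendsto α Filter.atTop (nhds 0) ∧
          (∃ Mq : ℝ, 0 < Mq ∧ ∃ K : ℕ, ∀ k ≥ K, α (k + 1) ≤ Mq * α k ^ 2) ∧
          ∃ K : ℕ, ∀ k ≥ K, ‖xs k - xstar‖ ≤ α k := by
  have hpath : Ioo (-δpath) δpath ∈ 𝓝 (0 : ℝ) := Ioo_mem_nhds (neg_lt_zero.2 hδpath) hδpath
  have hlim : Tendsto xpath (𝓝 0) (𝓝 xstar) :=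
    hxpath0 ▸ hxpathC1.continuousOn.continuousAt hpath
  have hcrit : ∀ᶠ δ in 𝓝 0, partialGradient φ (xpath δ, δ) = 0 :=
    mem_of_superset hpath fun δ hδ => hxpathcrit δ (abs_lt.2 hδ)
  obtain ⟨C, hC, hCpath⟩ := (isBigO_sub_sq_of_partialGradient_eq_zero (hφ.of_le (by norm_num))
    (hP.of_le (by norm_num)) hdecomp hgrad0 hpos hlim hcrit).exists_pos
  obtain ⟨L, u, hu, hγ⟩ :=
    exists_norm_partialGradient_le_of_tendsto (hφ.of_le (by norm_num)) hlim hcrit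
  have hT : ∀ᶠ δ in 𝓝[>] 0, ∀ x ∈ B, ‖xpath δ - (x + G δ x)‖ ≤ M * ‖xpath δ - x‖ ^ 2 := by
    filter_upwards [self_mem_nhdsWithin, nhdsWithin_le_nhds (eventually_le_nhds hδbar)]
      with δ hδ hδle x hxB
    exact norm_sub_apply_le_of_iterate (T := fun y => y + G δ y) (hG δ hδ hδle) hxB
  obtain ⟨δ', hδ', hδ'1, hconv⟩ := exists_convergesRQuadratically (p := xpath)
    (γ := fun δ x => ‖gradient (fun z => φ (z, δ)) x‖) (T := fun δ x => x + G δ x)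
    hu (hBopen.mem_nhds hxstarB) hC.le hM.le L.coe_nonneg
    (nhdsWithin_le_nhds (hCpath.bound.mono fun δ h => by simpa using h))
    (nhdsWithin_le_nhds hγ) hT
  exact ⟨univ, isOpen_univ, mem_univ _, δ', hδ', hδ'1, fun xs ds _ => hconv xs ds⟩

/-- Theorem 6.3. Let `φ(x, δ) = φ(x, 0) + δ²P(x, δ)` be `C³` with
`∇_x φ(x*, 0) = 0` and `∇²_{xx} φ(x*, 0) ≻ 0`, let `δ ↦ x(δ)` be the `C¹` path of local
minimizers of `φ(·, δ)` near `x*`, and let `{G_δ}` be a family of update maps converging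
quadratically (with a uniform constant `M`) to `x(δ)` from a neighborhood `B` of `x*` for
all `0 < δ ≤ δ̄`. Consider the iteration
`δ_k = max{min{‖∇_x φ(x_k, δ_{k−1})‖, δ_{k−1}}, δ_{k−1}²}`, `x_{k+1} = x_k + G_{δ_k}(x_k)`.
Then there are an open `B′ ∋ x*` and `δ′ ∈ (0, 1)` such that whenever `x₁ ∈ B′`,
`0 < δ₀ ≤ δ′` and `x_k → x*`, the convergence is R-quadratic: `‖x_k − x*‖` is eventually
majorized by a sequence `α_k → 0` converging quadratically to zero. -/
theorem regularized_algorithm_R_quadratic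
    {n : ℕ}
    (φ : EuclideanSpace ℝ (Fin n) × ℝ → ℝ) (hφ : ContDiff ℝ 3 φ)
    (P : EuclideanSpace ℝ (Fin n) × ℝ → ℝ) (hP : ContDiff ℝ 2 P)
    (hdecomp : ∀ x δ, φ (x, δ) = φ (x, 0) + δ ^ 2 * P (x, δ))
    (xstar : EuclideanSpace ℝ (Fin n))
    (hgrad0 : gradient (fun z => φ (z, 0)) xstar = 0)
    (hpos : ∀ v : EuclideanSpace ℝ (Fin n), v ≠ 0 →
      0 < ⟪v, fderiv ℝ (gradient fun z => φ (z, (0 : ℝ))) xstar v⟫)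
    -- the C¹ path of local minimizers from the implicit function theorem
    (xpath : ℝ → EuclideanSpace ℝ (Fin n)) (δpath : ℝ) (hδpath : 0 < δpath)
    (hxpath0 : xpath 0 = xstar)
    (hxpathC1 : ContDiffOn ℝ 1 xpath (Set.Ioo (-δpath) δpath))
    (hxpathcrit : ∀ δ : ℝ, |δ| < δpath → gradient (fun z => φ (z, δ)) (xpath δ) = 0)
    (hxpathmin : ∀ δ : ℝ, |δ| < δpath → IsLocalMin (fun z => φ (z, δ)) (xpath δ))
    -- the family of quadratically convergent update maps
    (G : ℝ → EuclideanSpace ℝ (Fin n) → EuclideanSpace ℝ (Fin n))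
    (δbar : ℝ) (hδbar : 0 < δbar) (hδbarpath : δbar < δpath)
    (B : Set (EuclideanSpace ℝ (Fin n))) (hBopen : IsOpen B) (hxstarB : xstar ∈ B)
    (M : ℝ) (hM : 0 < M)
    (hG : ∀ δ : ℝ, 0 < δ → δ ≤ δbar →
      ∀ xt : ℕ → EuclideanSpace ℝ (Fin n), xt 0 ∈ B →
        (∀ k, xt (k + 1) = xt k + G δ (xt k)) →
        ∀ k, ‖xpath δ - xt (k + 1)‖ ≤ M * ‖xpath δ - xt k‖ ^ 2) :
    ∃ B' : Set (EuclideanSpace ℝ (Fin n)), IsOpen B' ∧ xstar ∈ B' ∧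
    ∃ δ' : ℝ, 0 < δ' ∧ δ' < 1 ∧
      ∀ (xs : ℕ → EuclideanSpace ℝ (Fin n)) (ds : ℕ → ℝ),
        xs 1 ∈ B' → 0 < ds 0 → ds 0 ≤ δ' →
        (∀ k : ℕ, 1 ≤ k → ds k =
          max (min ‖gradient (fun z => φ (z, ds (k - 1))) (xs k)‖ (ds (k - 1)))
            (ds (k - 1) ^ 2)) →
        (∀ k : ℕ, 1 ≤ k → xs (k + 1) = xs k + G (ds k) (xs k)) →
        Filter.Tendsto xs Filter.atTop (nhds xstar) →
        ∃ α : ℕ → ℝ,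
          Filter.Tendsto α Filter.atTop (nhds 0) ∧
          (∃ Mq : ℝ, 0 < Mq ∧ ∃ K : ℕ, ∀ k ≥ K, α (k + 1) ≤ Mq * α k ^ 2) ∧
          ∃ K : ℕ, ∀ k ≥ K, ‖xs k - xstar‖ ≤ α k :=
  regularized_algorithm_R_quadratic_general φ hφ P hP hdecomp xstar hgrad0 hpos xpath δpath hδpath
    hxpath0 hxpathC1 hxpathcrit G δbar hδbar B hBopen hxstarB M hM hG
end

section
/- Let S ⊂ ℝⁿ be compact, let f : ℝⁿ → ℝ and c : ℝⁿ → ℝᵐ be continuously differentiable with g(x) = ∇f(x) and A(x) = ∇c(x) continuous, and suppose there is λ > 0 with σ_min(A(x)) ≥ λ for all x ∈ S. For x ∈ S let K(x) be the (n+m)×(n+m) block matrix [[I, A(x)], [A(x)ᵀ, 0]], let (g_σ(x), y_σ(x)) be the exact solution of K(x)(g_σ, y_σ) = (g(x), σc(x)), and define φ_σ(x) = f(x) − c(x)ᵀ y_σ(x). Then there exists M > 0 such that for all x ∈ S, all η₁, η₃ > 0, and all (g̃, ỹ) ∈ ℝⁿ × ℝᵐ satisfying ‖K(x)(g̃, ỹ)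 − (g(x), σc(x))‖ ≤ min{1, ‖c(x)‖⁻¹} · min{η₁, η₃}, the inexact values φ̃ = f(x) − c(x)ᵀỹ and g̃ satisfy |φ_σ(x) − φ̃| ≤ M η₁ and ‖g_σ(x) − g̃‖ ≤ M η₃. -/
/-!
Write `(p, q) = (g̃ - g_σ, ỹ - y_σ)`; by linearity `K (p, q)` is the residual `r = (r₁, r₂)`, i.e.
`p + A q = r₁` and `Aᵀ p = r₂`. Pairing the first equation with `A q` gives
`‖A q‖² = ⟪A q, r₁⟫ - ⟪r₂, q⟫ ≤ ‖A q‖ (‖r₁‖ + ‖r₂‖ / λ)`, because `λ ‖q‖ ≤ ‖A q‖`.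
Hence `‖A q‖`, and with it `‖q‖ ≤ ‖A q‖ / λ` and `‖p‖ ≤ ‖r₁‖ + ‖A q‖`, are bounded by `‖r‖` times
a constant depending on `λ` alone. Finally `φ_σ - φ̃ = ⟪c, q⟫`, and the factor `min {1, ‖c‖⁻¹}`
in the residual tolerance absorbs `‖c‖`.
-/

open Matrix

noncomputable def enormI {ι : Type*} [Fintype ι] (v : ι → ℝ) : ℝ :=
  Real.sqrt (∑ i, v i ^ 2)

section

variable {ι κ : Type*} [Fintype ι] [Fintype κ]

theorem enormI_eq_norm_toLp (v : ι → ℝ) : enormI v = ‖WithLp.toLp 2 v‖ := by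
  simp only [enormI, EuclideanSpace.norm_eq, Real.norm_eq_abs, sq_abs]

theorem enormI_ofLp (x : EuclideanSpace ℝ ι) : enormI x.ofLp = ‖x‖ := by
  rw [enormI_eq_norm_toLp, WithLp.toLp_ofLp]

theorem enormI_nonneg (v : ι → ℝ) : 0 ≤ enormI v :=
  Real.sqrt_nonneg _

theorem enormI_eq_sqrt_dotProduct (v : ι → ℝ) : enormI v = √(v ⬝ᵥ v) := by
  simp only [enormI, dotProduct, sq]

theorem enormI_sq (v : ι → ℝ) : enormI v ^ 2 = v ⬝ᵥ v := by
  rw [enormI, Real.sq_sqrt (by positivity)]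
  simp only [dotProduct, sq]

theorem abs_dotProduct_le_enormI_mul (v w : ι → ℝ) : |v ⬝ᵥ w| ≤ enormI v * enormI w := by
  simpa [enormI_eq_norm_toLp, EuclideanSpace.inner_eq_star_dotProduct, dotProduct_comm]
    using abs_real_inner_le_norm (WithLp.toLp 2 v) (WithLp.toLp 2 w)

theorem enormI_sub_le (v w : ι → ℝ) : enormI (v - w) ≤ enormI v + enormI w := by
  simpa only [enormI_eq_norm_toLp, WithLp.toLp_sub] using norm_sub_le _ _

theorem enormI_sub_comm (v w : ι → ℝ) : enormI (v - w) = enormI (w - v) := by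
  simp only [enormI_eq_norm_toLp, WithLp.toLp_sub, norm_sub_rev]

theorem enormI_le_enormI_sum_elim_left (u : ι → ℝ) (v : κ → ℝ) :
    enormI u ≤ enormI (Sum.elim u v) := by
  refine Real.sqrt_le_sqrt ?_
  simp only [Fintype.sum_sum_type, Sum.elim_inl, Sum.elim_inr]
  exact le_add_of_nonneg_right (Finset.sum_nonneg fun _ _ => sq_nonneg _)

theorem enormI_le_enormI_sum_elim_right (u : ι → ℝ) (v : κ → ℝ) :
    enormI v ≤ enormI (Sum.elim u v) := by
  refine Real.sqrt_le_sqrt ?_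
  simp only [Fintype.sum_sum_type, Sum.elim_inl, Sum.elim_inr]
  exact le_add_of_nonneg_left (Finset.sum_nonneg fun _ _ => sq_nonneg _)

theorem enormI_mulVec_le_of_saddle_point (A : Matrix ι κ ℝ) {lam : ℝ} (hlam : 0 < lam)
    (hA : ∀ v, lam * enormI v ≤ enormI (A *ᵥ v)) (p : ι → ℝ) (q : κ → ℝ) :
    enormI (A *ᵥ q) ≤ enormI (p + A *ᵥ q) + enormI (Aᵀ *ᵥ p) / lam := by
  set a := enormI (A *ᵥ q)
  have hq : enormI q ≤ a / lam := by rw [le_div_iff₀ hlam, mul_comm]; exact hA q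
  have hsq : a ^ 2 = (A *ᵥ q) ⬝ᵥ (p + A *ᵥ q) - (Aᵀ *ᵥ p) ⬝ᵥ q := by
    rw [enormI_sq, dotProduct_add, mulVec_transpose, ← dotProduct_mulVec, dotProduct_comm p]
    ring
  have hle : a * a ≤ a * (enormI (p + A *ᵥ q) + enormI (Aᵀ *ᵥ p) / lam) := by
    have h₁ := (le_abs_self _).trans (abs_dotProduct_le_enormI_mul (A *ᵥ q) (p + A *ᵥ q))
    have h₂ := (neg_le_abs _).trans (abs_dotProduct_le_enormI_mul (Aᵀ *ᵥ p) q)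
    have h₃ := mul_le_mul_of_nonneg_left hq (enormI_nonneg (Aᵀ *ᵥ p))
    rw [← sq, hsq]
    calc _ ≤ a * enormI (p + A *ᵥ q) + enormI (Aᵀ *ᵥ p) * (a / lam) := by linarith
      _ = _ := by ring
  have hb : 0 ≤ enormI (p + A *ᵥ q) + enormI (Aᵀ *ᵥ p) / lam :=
    add_nonneg (enormI_nonneg _) (div_nonneg (enormI_nonneg _) hlam.le)
  nlinarith [enormI_nonneg (A *ᵥ q)]

theorem fromBlocks_one_zero_mulVec_sum_elim {R : Type*} [Semiring R] [DecidableEq ι]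
    (A : Matrix ι κ R) (B : Matrix κ ι R) (p : ι → R) (q : κ → R) :
    fromBlocks 1 A B 0 *ᵥ Sum.elim p q = Sum.elim (p + A *ᵥ q) (B *ᵥ p) := by
  simp [fromBlocks_mulVec, Function.comp_def]

theorem enormI_le_of_enormI_fromBlocks_mulVec_le [DecidableEq ι] (A : Matrix ι κ ℝ) {lam : ℝ}
    (hlam : 0 < lam) (hA : ∀ v, lam * enormI v ≤ enormI (A *ᵥ v)) {p : ι → ℝ} {q : κ → ℝ}
    {δ : ℝ} (h : enormI (fromBlocks 1 A Aᵀ 0 *ᵥ Sum.elim p q) ≤ δ) :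
    enormI p ≤ (2 + 1 / lam) * δ ∧ enormI q ≤ (1 + 1 / lam) / lam * δ := by
  rw [fromBlocks_one_zero_mulVec_sum_elim] at h
  have h₁ := (enormI_le_enormI_sum_elim_left _ _).trans h
  have h₂ := (enormI_le_enormI_sum_elim_right _ _).trans h
  have hAq : enormI (A *ᵥ q) ≤ (1 + 1 / lam) * δ := by
    calc _ ≤ enormI (p + A *ᵥ q) + enormI (Aᵀ *ᵥ p) / lam :=
          enormI_mulVec_le_of_saddle_point A hlam hA p q
      _ ≤ δ + δ / lam := add_le_add h₁ (div_le_div_of_nonneg_right h₂ hlam.le)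
      _ = (1 + 1 / lam) * δ := by ring
  constructor
  · calc enormI p = enormI ((p + A *ᵥ q) - A *ᵥ q) := by rw [add_sub_cancel_right]
      _ ≤ enormI (p + A *ᵥ q) + enormI (A *ᵥ q) := enormI_sub_le _ _
      _ ≤ (2 + 1 / lam) * δ := by linarith
  · rw [div_mul_eq_mul_div, le_div_iff₀ hlam, mul_comm]
    exact (hA q).trans hAq

end

theorem ite_min_one_inv_le_one (t : ℝ) : (if t = 0 then 1 else min 1 t⁻¹) ≤ 1 := by
  split_ifs
  exacts [le_rfl, min_le_left _ _]

theorem mul_ite_min_one_inv_le_one {t : ℝ} (ht : 0 ≤ t) :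
    t * (if t = 0 then 1 else min 1 t⁻¹) ≤ 1 := by
  split_ifs with h
  · simp [h]
  · calc t * min 1 t⁻¹ ≤ t * t⁻¹ := mul_le_mul_of_nonneg_left (min_le_right _ _) ht
      _ = 1 := mul_inv_cancel₀ h

theorem inexact_penalty_evaluation_bounds_general
    {n m : ℕ}
    (S : Set (EuclideanSpace ℝ (Fin n)))
    (f : EuclideanSpace ℝ (Fin n) → ℝ)
    (c : EuclideanSpace ℝ (Fin n) → EuclideanSpace ℝ (Fin m))
    (A : EuclideanSpace ℝ (Fin n) → Matrix (Fin n) (Fin m) ℝ)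
    (lam : ℝ) (hlam : 0 < lam)
    (hsmin : ∀ x ∈ S, ∀ v : Fin m → ℝ,
      lam * Real.sqrt (v ⬝ᵥ v) ≤ Real.sqrt ((A x).mulVec v ⬝ᵥ (A x).mulVec v))
    (σ : ℝ)
    (K : EuclideanSpace ℝ (Fin n) → Matrix (Fin n ⊕ Fin m) (Fin n ⊕ Fin m) ℝ)
    (hK : ∀ x, K x = Matrix.fromBlocks 1 (A x) (A x)ᵀ 0)
    (gσ : EuclideanSpace ℝ (Fin n) → Fin n → ℝ)
    (yσ : EuclideanSpace ℝ (Fin n) → Fin m → ℝ)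
    (hexact : ∀ x ∈ S, (K x).mulVec (Sum.elim (gσ x) (yσ x)) =
      Sum.elim (fun i => gradient f x i) (fun j => σ * c x j))
    (φσ : EuclideanSpace ℝ (Fin n) → ℝ)
    (hφσ : ∀ x, φσ x = f x - (fun j => c x j) ⬝ᵥ yσ x) :
    ∃ M : ℝ, 0 < M ∧
      ∀ x ∈ S, ∀ η₁ η₃ : ℝ, 0 < η₁ → 0 < η₃ →
        ∀ (gt : Fin n → ℝ) (yt : Fin m → ℝ),
          enormI ((K x).mulVec (Sum.elim gt yt) -
              Sum.elim (fun i => gradient f x i) (fun j => σ * c x j)) ≤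
            (if ‖c x‖ = 0 then 1 else min 1 ‖c x‖⁻¹) * min η₁ η₃ →
          |φσ x - (f x - (fun j => c x j) ⬝ᵥ yt)| ≤ M * η₁ ∧
          enormI (gσ x - gt) ≤ M * η₃ := by
  set M := max (2 + 1 / lam) ((1 + 1 / lam) / lam)
  refine ⟨M, lt_max_of_lt_left (by positivity), ?_⟩
  intro x hx η₁ η₃ hη₁ hη₃ gt yt hres
  set w := if ‖c x‖ = 0 then 1 else min 1 ‖c x‖⁻¹
  have hη : 0 ≤ min η₁ η₃ := (lt_min hη₁ hη₃).le
  have herr : K x *ᵥ Sum.elim (gt - gσ x) (yt - yσ x) =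
      K x *ᵥ Sum.elim gt yt - Sum.elim (fun i => gradient f x i) (fun j => σ * c x j) := by
    rw [Sum.elim_sub_sub, mulVec_sub, hexact x hx]
  obtain ⟨hg, hy⟩ := enormI_le_of_enormI_fromBlocks_mulVec_le (A x) hlam
    (fun v => by simpa only [enormI_eq_sqrt_dotProduct] using hsmin x hx v)
    (δ := w * min η₁ η₃) (by rw [← hK, herr]; exact hres)
  constructor
  · calc |φσ x - (f x - (fun j => c x j) ⬝ᵥ yt)| = |(c x).ofLp ⬝ᵥ (yt - yσ x)| := by
          rw [hφσ, dotProduct_sub]; ring_nf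
      _ ≤ ‖c x‖ * enormI (yt - yσ x) := by
          simpa only [enormI_ofLp] using abs_dotProduct_le_enormI_mul (c x).ofLp (yt - yσ x)
      _ ≤ ‖c x‖ * ((1 + 1 / lam) / lam * (w * min η₁ η₃)) := by gcongr
      _ = (1 + 1 / lam) / lam * (‖c x‖ * w) * min η₁ η₃ := by ring
      _ ≤ M * 1 * η₁ := by
          gcongr
          exacts [le_max_right _ _, mul_ite_min_one_inv_le_one (norm_nonneg _), min_le_left _ _]
      _ = M * η₁ := by rw [mul_one]
  · calc enormI (gσ x - gt) = enormI (gt - gσ x) := enormI_sub_comm _ _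
      _ ≤ (2 + 1 / lam) * (w * min η₁ η₃) := hg
      _ ≤ M * (1 * η₃) := by
          gcongr
          exacts [le_max_left _ _, ite_min_one_inv_le_one _, min_le_right _ _]
      _ = M * η₃ := by rw [one_mul]

/-- first part of Proposition 7.1. On a compact set `S` where
`σ_min(A(x)) ≥ λ > 0`, let `K(x) = [[I, A(x)], [A(x)ᵀ, 0]]`, let `(g_σ(x), y_σ(x))` solve
`K(x)(g_σ, y_σ) = (g(x), σc(x))` exactly and `φ_σ(x) = f(x) − c(x)ᵀy_σ(x)`. Then there is
`M > 0` such that any inexact solution `(g̃, ỹ)` whose residual is at most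
`min{1, ‖c(x)‖⁻¹}·min{η₁, η₃}` yields `|φ_σ(x) − φ̃| ≤ Mη₁` and `‖g_σ(x) − g̃‖ ≤ Mη₃`,
where `φ̃ = f(x) − c(x)ᵀỹ`. -/
theorem inexact_penalty_evaluation_bounds
    {n m : ℕ}
    (S : Set (EuclideanSpace ℝ (Fin n))) (hS : IsCompact S)
    (f : EuclideanSpace ℝ (Fin n) → ℝ) (hf : ContDiff ℝ 1 f)
    (c : EuclideanSpace ℝ (Fin n) → EuclideanSpace ℝ (Fin m)) (hc : ContDiff ℝ 1 c)
    (A : EuclideanSpace ℝ (Fin n) → Matrix (Fin n) (Fin m) ℝ)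
    (hA : ∀ x, ∀ i : Fin n, ∀ j : Fin m, A x i j = gradient (fun z => c z j) x i)
    (lam : ℝ) (hlam : 0 < lam)
    (hsmin : ∀ x ∈ S, ∀ v : Fin m → ℝ,
      lam * Real.sqrt (v ⬝ᵥ v) ≤ Real.sqrt ((A x).mulVec v ⬝ᵥ (A x).mulVec v))
    (σ : ℝ)
    (K : EuclideanSpace ℝ (Fin n) → Matrix (Fin n ⊕ Fin m) (Fin n ⊕ Fin m) ℝ)
    (hK : ∀ x, K x = Matrix.fromBlocks 1 (A x) (A x)ᵀ 0)
    (gσ : EuclideanSpace ℝ (Fin n) → Fin n → ℝ)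
    (yσ : EuclideanSpace ℝ (Fin n) → Fin m → ℝ)
    (hexact : ∀ x ∈ S, (K x).mulVec (Sum.elim (gσ x) (yσ x)) =
      Sum.elim (fun i => gradient f x i) (fun j => σ * c x j))
    (φσ : EuclideanSpace ℝ (Fin n) → ℝ)
    (hφσ : ∀ x, φσ x = f x - (fun j => c x j) ⬝ᵥ yσ x) :
    ∃ M : ℝ, 0 < M ∧
      ∀ x ∈ S, ∀ η₁ η₃ : ℝ, 0 < η₁ → 0 < η₃ →
        ∀ (gt : Fin n → ℝ) (yt : Fin m → ℝ),
          enormI ((K x).mulVec (Sum.elim gt yt) -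
              Sum.elim (fun i => gradient f x i) (fun j => σ * c x j)) ≤
            (if ‖c x‖ = 0 then 1 else min 1 ‖c x‖⁻¹) * min η₁ η₃ →
          |φσ x - (f x - (fun j => c x j) ⬝ᵥ yt)| ≤ M * η₁ ∧
          enormI (gσ x - gt) ≤ M * η₃ :=
  inexact_penalty_evaluation_bounds_general S f c A lam hlam hsmin σ K hK gσ yσ hexact φσ hφσ
end

section
/- Let A be a real n×m matrix with full column rank m, H a symmetric n×n matrix, S a real m×n matrix, σ ∈ ℝ, and let Y be the n×m matrix determined by AᵀA Yᵀ = Aᵀ(H − σI) + S. For any u ∈ ℝᵐ, set w = −(AᵀA)⁻¹u and v = −Aw, so that (v, w) is the unique solution of the saddle-point system [[I, A], [Aᵀ, 0]](v, w) = (0, u). Then Y u = (H − σI)v − Sᵀw. -/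
open Matrix

lemma isUnit_transpose_mul_self_of_rank
    {n m : ℕ} (A : Matrix (Fin n) (Fin m) ℝ) (hA : A.rank = m) :
    IsUnit (Aᵀ * A) := by
  rw [← Matrix.mulVec_injective_iff_isUnit]
  have hker : LinearMap.ker (Aᵀ * A).mulVecLin = ⊥ := by
    rw [Matrix.ker_mulVecLin_transpose_mul_self]
    have h1 := A.mulVecLin.finrank_range_add_finrank_ker
    have h2 : Module.finrank ℝ (LinearMap.range A.mulVecLin) = m := hA
    simp only [h2] at h1
    have : Module.finrank ℝ (Fin m → ℝ) = m := by simp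
    rw [this] at h1
    have h3 : Module.finrank ℝ (LinearMap.ker A.mulVecLin) = 0 := by omega
    exact Submodule.finrank_eq_zero.mp h3
  intro x y hxy
  have := LinearMap.ker_eq_bot.mp hker
  exact this hxy

/-- correctness of Algorithm 3.1. Let `A` have full column rank,
`H` symmetric, and `Y` satisfy `AᵀA Yᵀ = Aᵀ(H − σI) + S`. For `u ∈ ℝᵐ`, set
`w = −(AᵀA)⁻¹u` and `v = −Aw`; then `(v, w)` is the unique solution of the saddle-point
system `v + Aw = 0`, `Aᵀv = u`, and `Y u = (H − σI)v − Sᵀw`. -/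
theorem product_Yu_via_saddle_point
    {n m : ℕ} (A : Matrix (Fin n) (Fin m) ℝ) (hA : A.rank = m)
    (H : Matrix (Fin n) (Fin n) ℝ) (hH : H.IsSymm)
    (S : Matrix (Fin m) (Fin n) ℝ) (σ : ℝ)
    (Y : Matrix (Fin n) (Fin m) ℝ)
    (hY : Aᵀ * A * Yᵀ = Aᵀ * (H - σ • 1) + S)
    (u : Fin m → ℝ) (w : Fin m → ℝ) (v : Fin n → ℝ)
    (hw : w = -((Aᵀ * A)⁻¹.mulVec u))
    (hv : v = -(A.mulVec w)) :
    (v + A.mulVec w = 0 ∧ Aᵀ.mulVec v = u) ∧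
    (∀ (v' : Fin n → ℝ) (w' : Fin m → ℝ),
      v' + A.mulVec w' = 0 → Aᵀ.mulVec v' = u → v' = v ∧ w' = w) ∧
    Y.mulVec u = (H - σ • 1).mulVec v - Sᵀ.mulVec w := by
  have hG : IsUnit (Aᵀ * A) := isUnit_transpose_mul_self_of_rank A hA
  have hGdet : IsUnit (Aᵀ * A).det := (Matrix.isUnit_iff_isUnit_det _).mp hG
  have hGinv : (Aᵀ * A) * (Aᵀ * A)⁻¹ = 1 := Matrix.mul_nonsing_inv _ hGdet
  have hinvG : (Aᵀ * A)⁻¹ * (Aᵀ * A) = 1 := Matrix.nonsing_inv_mul _ hGdet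
  -- G w = -u
  have hGw : (Aᵀ * A).mulVec w = -u := by
    rw [hw, Matrix.mulVec_neg, Matrix.mulVec_mulVec, hGinv, Matrix.one_mulVec]
  have hAtv : Aᵀ.mulVec v = u := by
    rw [hv, Matrix.mulVec_neg, Matrix.mulVec_mulVec, hGw, neg_neg]
  refine ⟨⟨by rw [hv]; simp, hAtv⟩, ?_, ?_⟩
  · intro v' w' h1 h2
    have hv' : v' = -(A.mulVec w') := by
      have := congrArg (· - A.mulVec w') h1
      simpa [sub_eq_iff_eq_add] using this
    have hGw' : (Aᵀ * A).mulVec w' = -u := by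
      rw [← Matrix.mulVec_mulVec, ← h2, hv', Matrix.mulVec_neg, Matrix.mulVec_mulVec, neg_neg]
    have hw' : w' = w := by
      have := congrArg ((Aᵀ * A)⁻¹.mulVec) hGw'
      rw [Matrix.mulVec_mulVec, hinvG, Matrix.one_mulVec, Matrix.mulVec_neg] at this
      rw [this, hw]
    exact ⟨by rw [hv', hw', ← hv], hw'⟩
  · -- Y * (AᵀA) = (H - σ•1) * A + Sᵀ
    have hYG : Y * (Aᵀ * A) = (H - σ • 1) * A + Sᵀ := by
      have := congrArg Matrix.transpose hY
      rw [Matrix.transpose_mul, Matrix.transpose_mul, Matrix.transpose_transpose,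
        Matrix.transpose_add, Matrix.transpose_mul, Matrix.transpose_transpose] at this
      have hHs : (H - σ • 1)ᵀ = H - σ • 1 := by
        rw [Matrix.transpose_sub, hH.eq, Matrix.transpose_smul, Matrix.transpose_one]
      rw [hHs] at this
      exact this
    have hu : u = (Aᵀ * A).mulVec (-w) := by rw [Matrix.mulVec_neg, hGw, neg_neg]
    rw [hu, Matrix.mulVec_mulVec, hYG, Matrix.add_mulVec, Matrix.mulVec_neg,
      Matrix.mulVec_neg, ← Matrix.mulVec_mulVec, hv, Matrix.mulVec_neg]
    abel
end

section
/- Define φ : ℝ → ℝ by φ(x) = (x³ + x − 2)² / (3x² + 1)². Then there exists x̄ ∈ (−2, −1) such that φ′(x̄) = 0 and x̄³ + x̄ − 2 ≠ 0 (so φ(x̄) > 0); hence φ has a spurious stationary point that is not a solution of the feasibility problem x³ + x − 2 = 0, whose unique real solution is x = 1. -/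
/-! With `c x = x³ + x − 2` and `A = c' = 3x² + 1`, the quotient rule gives
`φ' = 2 c (A² − c A') / A³`, and here `A² − c A' = 3x⁴ + 12x + 1`. This quartic is `−8` at `−1`
and `25` at `−2`, so it vanishes somewhere in `(−2, −1)`, and there `φ' = 0`. Since
`c = (x − 1)(x² + x + 2)` with `x² + x + 2 > 0`, the only zero of `c` is `1`, so `c ≠ 0` and
`φ > 0` at that point. -/

open Set

theorem HasDerivAt.sq_div_sq {𝕜 : Type*} [NontriviallyNormedField 𝕜] {c d : 𝕜 → 𝕜}
    {c' d' x : 𝕜}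
    (hc : HasDerivAt c c' x) (hd : HasDerivAt d d' x) (hdx : d x ≠ 0) :
    HasDerivAt (fun y => c y ^ 2 / d y ^ 2) (2 * c x * (c' * d x - c x * d') / d x ^ 3) x := by
  have h : HasDerivAt (fun y => c y ^ 2 / d y ^ 2) _ x :=
    (hc.pow 2).div (hd.pow 2) (pow_ne_zero 2 hdx)
  convert h using 1
  simp only [Pi.pow_apply]
  field_simp
  ring

lemma cubic_eq_zero_iff (x : ℝ) : x ^ 3 + x - 2 = 0 ↔ x = 1 := by
  constructor
  · intro h
    have hfactor : (x - 1) * (x ^ 2 + x + 2) = 0 := by linear_combination h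
    have hquad : x ^ 2 + x + 2 ≠ 0 := by nlinarith [sq_nonneg (x + 1 / 2)]
    exact sub_eq_zero.mp ((mul_eq_zero.mp hfactor).resolve_right hquad)
  · rintro rfl
    norm_num

lemma exists_quartic_root_mem_Ioo :
    ∃ x ∈ Ioo (-2 : ℝ) (-1), 3 * x ^ 4 + 12 * x + 1 = 0 := by
  have hcont : ContinuousOn (fun x : ℝ => 3 * x ^ 4 + 12 * x + 1) (Icc (-2) (-1)) := by
    fun_prop
  exact intermediate_value_Ioo' (by norm_num) hcont (by norm_num)

lemma hasDerivAt_fletcher_penalty (x : ℝ) :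
    HasDerivAt (fun y : ℝ => (y ^ 3 + y - 2) ^ 2 / (3 * y ^ 2 + 1) ^ 2)
      (2 * (x ^ 3 + x - 2) * (3 * x ^ 4 + 12 * x + 1) / (3 * x ^ 2 + 1) ^ 3) x := by
  have hc : HasDerivAt (fun y : ℝ => y ^ 3 + y - 2) (3 * x ^ 2 + 1) x := by
    simpa using ((hasDerivAt_pow 3 x).add (hasDerivAt_id x)).sub_const 2
  have hA : HasDerivAt (fun y : ℝ => 3 * y ^ 2 + 1) (6 * x) x :=
    (((hasDerivAt_pow 2 x).const_mul 3).add_const 1).congr_deriv (by ring)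
  exact (hc.sq_div_sq hA (by positivity)).congr_deriv (by ring)

/-- spurious stationary point example. For
`φ(x) = (x³ + x − 2)²/(3x² + 1)²` there is `x̄ ∈ (−2, −1)` with `φ′(x̄) = 0` and
`x̄³ + x̄ − 2 ≠ 0` (so `φ(x̄) > 0`): a stationary point of Fletcher's penalty that is not a
solution of the feasibility problem `x³ + x − 2 = 0`, whose unique real solution is
`x = 1`. -/
theorem spurious_stationary_point
    (φ : ℝ → ℝ)
    (hφ : ∀ x : ℝ, φ x = (x ^ 3 + x - 2) ^ 2 / (3 * x ^ 2 + 1) ^ 2) :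
    (∃ xbar : ℝ, xbar ∈ Set.Ioo (-2 : ℝ) (-1) ∧
      deriv φ xbar = 0 ∧
      xbar ^ 3 + xbar - 2 ≠ 0 ∧
      0 < φ xbar) ∧
    (∀ x : ℝ, x ^ 3 + x - 2 = 0 ↔ x = 1) := by
  obtain ⟨xbar, hxbar, hroot⟩ := exists_quartic_root_mem_Ioo
  have hc : xbar ^ 3 + xbar - 2 ≠ 0 := fun h => by
    linarith [hxbar.2, (cubic_eq_zero_iff xbar).mp h]
  have hderiv : deriv φ xbar = 0 := by
    rw [funext hφ, (hasDerivAt_fletcher_penalty xbar).deriv, hroot]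
    simp
  refine ⟨⟨xbar, hxbar, hderiv, hc, ?_⟩, cubic_eq_zero_iff⟩
  rw [hφ]
  positivity
end
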